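/- arXiv:1906.08696 — 10 statements merged into one kernel-verified Lean document; each statement's English description precedes it below -/
import Mathlib

section
/- Maximum principle for the Robin problem: Let ψ = (ψ₁,…,ψₙ) be any vector-valued function in the domain of L such that (β₀ψ)_i(0,t) ≥ 0 for all i and all t ∈ [0,T], (β₁ψ)_i(1,t) ≥ 0 for all i and all t ∈ [0,T], and ψ_i(x,0) ≥ 0 for all i and all x ∈ [0,1]. If (Lψ)_i(x,t) ≥ 0 for all i and all (x,t) ∈ Ω, then ψ_i(x,t) ≥ 0 for all i and all (x,t) ∈ Ω̄. -/
open Set Filter Topology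


/- STATEMENT 0: Maximum principle for the Robin problem for the parabolic
singularly perturbed system of reaction-diffusion equations.
The system has `n + 1` components (`n + 1 ≥ 1`), indexed by `Fin (n + 1)`.
`Ω = (0,1) × (0,T]`, `Ω̄ = [0,1] × [0,T]`.
`ψ`, `ψx`, `ψt`, `ψxx` are the function and its partial derivatives;
membership in the domain of `L` is expressed by the continuity and
`HasDerivWithinAt` hypotheses. -/
theorem stmt_0
    (n : ℕ) (T : ℝ) (hT : 0 < T)
    (ε : Fin (n + 1) → ℝ)
    (hε0 : ∀ i, 0 < ε i) (hε1 : ∀ i, ε i < 1) (hεm : StrictMono ε)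
    (a : Fin (n + 1) → Fin (n + 1) → ℝ → ℝ → ℝ)
    (ha_cont : ∀ i j, ContinuousOn (fun p : ℝ × ℝ => a i j p.1 p.2)
      (Set.Icc 0 1 ×ˢ Set.Icc 0 T))
    (ha_diag : ∀ i, ∀ x ∈ Set.Icc (0:ℝ) 1, ∀ t ∈ Set.Icc (0:ℝ) T,
      ∑ j ∈ Finset.univ.erase i, |a i j x t| < a i i x t)
    (ha_off : ∀ i j, i ≠ j → ∀ x ∈ Set.Icc (0:ℝ) 1, ∀ t ∈ Set.Icc (0:ℝ) T,
      a i j x t ≤ 0)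
    (α : ℝ) (hα0 : 0 < α)
    (hα : ∀ i, ∀ x ∈ Set.Icc (0:ℝ) 1, ∀ t ∈ Set.Icc (0:ℝ) T, α < ∑ j, a i j x t)
    (ψ ψx ψt ψxx : Fin (n + 1) → ℝ → ℝ → ℝ)
    -- ψ is in the domain of L :
    (hψ_cont : ∀ i, ContinuousOn (fun p : ℝ × ℝ => ψ i p.1 p.2)
      (Set.Icc 0 1 ×ˢ Set.Icc 0 T))
    (hψx_cont : ∀ i, ContinuousOn (fun p : ℝ × ℝ => ψx i p.1 p.2)
      (Set.Icc 0 1 ×ˢ Set.Icc 0 T))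
    (hψx : ∀ i, ∀ t ∈ Set.Icc (0:ℝ) T, ∀ x ∈ Set.Icc (0:ℝ) 1,
      HasDerivWithinAt (fun y => ψ i y t) (ψx i x t) (Set.Icc 0 1) x)
    (hψt : ∀ i, ∀ x ∈ Set.Ioo (0:ℝ) 1, ∀ t ∈ Set.Ioc (0:ℝ) T,
      HasDerivWithinAt (fun s => ψ i x s) (ψt i x t) (Set.Icc 0 T) t)
    (hψxx : ∀ i, ∀ t ∈ Set.Ioc (0:ℝ) T, ∀ x ∈ Set.Ioo (0:ℝ) 1,
      HasDerivWithinAt (fun y => ψx i y t) (ψxx i x t) (Set.Ioo 0 1) x)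
    (hψt_cont : ∀ i, ContinuousOn (fun p : ℝ × ℝ => ψt i p.1 p.2)
      (Set.Ioo 0 1 ×ˢ Set.Ioc 0 T))
    (hψxx_cont : ∀ i, ContinuousOn (fun p : ℝ × ℝ => ψxx i p.1 p.2)
      (Set.Ioo 0 1 ×ˢ Set.Ioc 0 T))
    -- boundary, initial and interior sign conditions :
    (hb0 : ∀ i, ∀ t ∈ Set.Icc (0:ℝ) T, 0 ≤ ψ i 0 t - Real.sqrt (ε i) * ψx i 0 t)
    (hb1 : ∀ i, ∀ t ∈ Set.Icc (0:ℝ) T, 0 ≤ ψ i 1 t + Real.sqrt (ε i) * ψx i 1 t)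
    (hinit : ∀ i, ∀ x ∈ Set.Icc (0:ℝ) 1, 0 ≤ ψ i x 0)
    (hL : ∀ i, ∀ x ∈ Set.Ioo (0:ℝ) 1, ∀ t ∈ Set.Ioc (0:ℝ) T,
      0 ≤ ψt i x t - ε i * ψxx i x t + ∑ j, a i j x t * ψ j x t) :
    ∀ i, ∀ x ∈ Set.Icc (0:ℝ) 1, ∀ t ∈ Set.Icc (0:ℝ) T, 0 ≤ ψ i x t := by
  classical
  -- the compact domain
  have hKc : IsCompact (Set.Icc (0:ℝ) 1 ×ˢ Set.Icc (0:ℝ) T) := isCompact_Icc.prod isCompact_Icc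
  have hSc : IsCompact ((Set.univ : Set (Fin (n+1))) ×ˢ (Set.Icc (0:ℝ) 1 ×ˢ Set.Icc (0:ℝ) T)) :=
    Set.finite_univ.isCompact.prod hKc
  have hSne : ((Set.univ : Set (Fin (n+1))) ×ˢ (Set.Icc (0:ℝ) 1 ×ˢ Set.Icc (0:ℝ) T)).Nonempty :=
    ⟨⟨0, 0, 0⟩, Set.mem_univ _, ⟨Set.left_mem_Icc.2 zero_le_one, Set.left_mem_Icc.2 hT.le⟩⟩
  have hFc : ContinuousOn (fun q : Fin (n+1) × ℝ × ℝ => ψ q.1 q.2.1 q.2.2)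
      ((Set.univ : Set (Fin (n+1))) ×ˢ (Set.Icc (0:ℝ) 1 ×ˢ Set.Icc (0:ℝ) T)) := by
    intro q hq
    have hnb : ({q.1} : Set (Fin (n+1))) ×ˢ (Set.univ : Set (ℝ × ℝ)) ∈ 𝓝 q :=
      ((isOpen_discrete _).prod isOpen_univ).mem_nhds ⟨rfl, trivial⟩
    rw [← continuousWithinAt_inter hnb]
    have h2 : ContinuousWithinAt (fun q' : Fin (n+1) × ℝ × ℝ => ψ q.1 q'.2.1 q'.2.2)
        (((Set.univ : Set (Fin (n+1))) ×ˢ (Set.Icc (0:ℝ) 1 ×ˢ Set.Icc (0:ℝ) T)) ∩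
          ({q.1} ×ˢ Set.univ)) q := by
      refine ((hψ_cont q.1).continuousWithinAt hq.2).comp continuousWithinAt_snd ?_
      intro p hp
      exact hp.1.2
    refine h2.congr ?_ rfl
    intro p hp
    have hp1 : p.1 = q.1 := hp.2.1
    rw [hp1]
  obtain ⟨⟨i0, x0, t0⟩, hqS, hminF⟩ := hSc.exists_isMinOn hSne hFc
  have hx0 : x0 ∈ Set.Icc (0:ℝ) 1 := hqS.2.1
  have ht0 : t0 ∈ Set.Icc (0:ℝ) T := hqS.2.2
  have hminv : ∀ j, ∀ x ∈ Set.Icc (0:ℝ) 1, ∀ t ∈ Set.Icc (0:ℝ) T,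
      ψ i0 x0 t0 ≤ ψ j x t := by
    intro j x hx t ht
    have hmem : ((j, x, t) : Fin (n+1) × ℝ × ℝ) ∈
        (Set.univ : Set (Fin (n+1))) ×ˢ (Set.Icc (0:ℝ) 1 ×ˢ Set.Icc (0:ℝ) T) :=
      ⟨Set.mem_univ j, hx, ht⟩
    exact hminF hmem
  suffices hms : 0 ≤ ψ i0 x0 t0 by
    intro i x hx t ht
    exact hms.trans (hminv i x hx t ht)
  by_contra hms
  push_neg at hms
  -- case t0 = 0
  rcases eq_or_lt_of_le ht0.1 with h0t | h0t
  · rw [← h0t] at hms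
    exact absurd (hinit i0 x0 hx0) (not_le.2 hms)
  -- continuity of x ↦ ψ i x t on [0,1]
  have hcx : ∀ i, ∀ t ∈ Set.Icc (0:ℝ) T, ContinuousOn (fun y => ψ i y t) (Set.Icc 0 1) :=
    fun i t ht x hx => (hψx i t ht x hx).continuousWithinAt
  have hsq : 0 < Real.sqrt (ε i0) := Real.sqrt_pos.2 (hε0 i0)
  -- case x0 = 0
  rcases eq_or_lt_of_le hx0.1 with hxl | hxl
  · have hd := hψx i0 t0 ht0 x0 hx0
    rw [← hxl] at hms hd hminv
    rw [hasDerivWithinAt_iff_tendsto_slope] at hd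
    have hsub : Set.Ioc (0:ℝ) 1 ⊆ Set.Icc 0 1 \ {0} :=
      fun y hy => ⟨⟨hy.1.le, hy.2⟩, ne_of_gt hy.1⟩
    have hne : (𝓝[Set.Ioc (0:ℝ) 1] (0:ℝ)).NeBot := by
      rw [← mem_closure_iff_nhdsWithin_neBot, closure_Ioc zero_ne_one]
      exact Set.left_mem_Icc.2 zero_le_one
    have hge : 0 ≤ ψx i0 0 t0 := by
      refine ge_of_tendsto (hd.mono_left (nhdsWithin_mono _ hsub))
        (Filter.eventually_of_mem self_mem_nhdsWithin ?_)
      intro y hy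
      have h1 : ψ i0 0 t0 ≤ ψ i0 y t0 := hminv i0 y ⟨hy.1.le, hy.2⟩ t0 ht0
      rw [slope_def_field]
      apply div_nonneg (by linarith) (by linarith [hy.1])
    have hb := hb0 i0 t0 ht0
    nlinarith [mul_nonneg hsq.le hge]
  -- case x0 = 1
  rcases eq_or_lt_of_le hx0.2 with hxr | hxr
  · have hd := hψx i0 t0 ht0 x0 hx0
    rw [hxr] at hms hd hminv
    rw [hasDerivWithinAt_iff_tendsto_slope] at hd
    have hsub : Set.Ico (0:ℝ) 1 ⊆ Set.Icc 0 1 \ {1} :=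
      fun y hy => ⟨⟨hy.1, hy.2.le⟩, ne_of_lt hy.2⟩
    have hne : (𝓝[Set.Ico (0:ℝ) 1] (1:ℝ)).NeBot := by
      rw [← mem_closure_iff_nhdsWithin_neBot, closure_Ico one_ne_zero.symm]
      exact Set.right_mem_Icc.2 zero_le_one
    have hge : ψx i0 1 t0 ≤ 0 := by
      refine le_of_tendsto (hd.mono_left (nhdsWithin_mono _ hsub))
        (Filter.eventually_of_mem self_mem_nhdsWithin ?_)
      intro y hy
      have h1 : ψ i0 1 t0 ≤ ψ i0 y t0 := hminv i0 y ⟨hy.1, hy.2.le⟩ t0 ht0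
      rw [slope_def_field]
      apply div_nonpos_of_nonneg_of_nonpos (by linarith) (by linarith [hy.2])
    have hb := hb1 i0 t0 ht0
    nlinarith [mul_nonpos_of_nonneg_of_nonpos hsq.le hge]
  -- interior case
  have hx0' : x0 ∈ Set.Ioo (0:ℝ) 1 := ⟨hxl, hxr⟩
  have ht0' : t0 ∈ Set.Ioc (0:ℝ) T := ⟨h0t, ht0.2⟩
  -- ψt ≤ 0
  have hψt_le : ψt i0 x0 t0 ≤ 0 := by
    have hdt := hψt i0 x0 hx0' t0 ht0'
    rw [hasDerivWithinAt_iff_tendsto_slope] at hdt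
    have hsub : Set.Ioo (0:ℝ) t0 ⊆ Set.Icc 0 T \ {t0} :=
      fun s hs => ⟨⟨hs.1.le, hs.2.le.trans ht0.2⟩, ne_of_lt hs.2⟩
    have hne : (𝓝[Set.Ioo (0:ℝ) t0] t0).NeBot := by
      rw [← mem_closure_iff_nhdsWithin_neBot, closure_Ioo (ne_of_gt h0t).symm]
      exact Set.right_mem_Icc.2 h0t.le
    refine le_of_tendsto (hdt.mono_left (nhdsWithin_mono _ hsub))
      (Filter.eventually_of_mem self_mem_nhdsWithin ?_)
    intro s hs
    have h1 : ψ i0 x0 t0 ≤ ψ i0 x0 s := hminv i0 x0 hx0 s ⟨hs.1.le, hs.2.le.trans ht0.2⟩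
    rw [slope_def_field]
    apply div_nonpos_of_nonneg_of_nonpos (by linarith) (by linarith [hs.2])
  -- ψx = 0
  have hIcc_nbhd : Set.Icc (0:ℝ) 1 ∈ 𝓝 x0 := Icc_mem_nhds hxl hxr
  have hdx : HasDerivAt (fun y => ψ i0 y t0) (ψx i0 x0 t0) x0 :=
    (hψx i0 t0 ht0 x0 hx0).hasDerivAt hIcc_nbhd
  have hlocmin : IsLocalMin (fun y => ψ i0 y t0) x0 :=
    Filter.eventually_of_mem hIcc_nbhd (fun y hy => hminv i0 y hy t0 ht0)
  have hψx0 : ψx i0 x0 t0 = 0 := hlocmin.hasDerivAt_eq_zero hdx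
  -- ψxx ≥ 0
  have hψxx_ge : 0 ≤ ψxx i0 x0 t0 := by
    have hdxx : HasDerivAt (fun y => ψx i0 y t0) (ψxx i0 x0 t0) x0 :=
      (hψxx i0 t0 ht0' x0 hx0').hasDerivAt (Ioo_mem_nhds hxl hxr)
    rw [hasDerivAt_iff_tendsto_slope] at hdxx
    -- build a sequence of points to the right of x0 where the slope of ψx is ≥ 0
    have hyk : ∀ k : ℕ, x0 < x0 + (1 - x0) / (k + 2) ∧ x0 + (1 - x0) / (k + 2) < 1 := by
      intro k
      have hk2 : (0:ℝ) < (k:ℝ) + 2 := by positivity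
      constructor
      · have : 0 < (1 - x0) / (k + 2) := div_pos (by linarith) hk2
        linarith
      · have h1 : (1 - x0) / (k + 2) < (1 - x0) / 1 := by
          apply div_lt_div_of_pos_left (by linarith) one_pos (by linarith)
        rw [div_one] at h1
        linarith
    have hmvt : ∀ k : ℕ, ∃ c ∈ Set.Ioo x0 (x0 + (1 - x0) / (k + 2)),
        ψx i0 c t0 = (ψ i0 (x0 + (1 - x0) / (k + 2)) t0 - ψ i0 x0 t0) / (x0 + (1 - x0) / (k + 2) - x0) := by
      intro k
      obtain ⟨hk1, hk2⟩ := hyk k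
      refine exists_hasDerivAt_eq_slope (fun y => ψ i0 y t0) (fun y => ψx i0 y t0) hk1
        ((hcx i0 t0 ht0).mono ?_) ?_
      · intro y hy
        exact ⟨hxl.le.trans hy.1, hy.2.trans hk2.le⟩
      · intro y hy
        have hy01 : y ∈ Set.Icc (0:ℝ) 1 := ⟨(hxl.trans hy.1).le, (hy.2.trans hk2).le⟩
        exact (hψx i0 t0 ht0 y hy01).hasDerivAt
          (Icc_mem_nhds (hxl.trans hy.1) (hy.2.trans hk2))
    choose c hc hceq using hmvt
    have hclim : Filter.Tendsto c Filter.atTop (𝓝[≠] x0) := by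
      rw [tendsto_nhdsWithin_iff]
      constructor
      · have hub : Filter.Tendsto (fun k : ℕ => x0 + (1 - x0) / (k + 2)) Filter.atTop (𝓝 x0) := by
          have h0 : Filter.Tendsto (fun k : ℕ => (1 - x0) / ((k:ℝ) + 2)) Filter.atTop (𝓝 0) := by
            apply Filter.Tendsto.div_atTop tendsto_const_nhds
            exact Filter.tendsto_atTop_add_const_right _ 2 tendsto_natCast_atTop_atTop
          have := tendsto_const_nhds.add h0 (x := Filter.atTop (α := ℕ)) (f := fun _ => x0)
          simpa using this
        refine tendsto_of_tendsto_of_tendsto_of_le_of_le tendsto_const_nhds hub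
          (fun k => (hc k).1.le) (fun k => (hc k).2.le)
      · exact Filter.Eventually.of_forall (fun k => ne_of_gt (hc k).1)
    have hslope := hdxx.comp hclim
    refine ge_of_tendsto hslope (Filter.Eventually.of_forall ?_)
    intro k
    simp only [Function.comp_apply]
    rw [slope_def_field, hψx0, sub_zero, hceq k]
    have h1 : ψ i0 x0 t0 ≤ ψ i0 (x0 + (1 - x0) / (k + 2)) t0 := by
      refine hminv i0 _ ⟨?_, (hyk k).2.le⟩ t0 ht0
      exact (hxl.trans (hyk k).1).le
    apply div_nonneg
    · apply div_nonneg (by linarith)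
      linarith [(hyk k).1]
    · linarith [(hc k).1]
  -- final contradiction
  have hLpos := hL i0 x0 hx0' t0 ht0'
  have hsum : ∑ j, a i0 j x0 t0 * ψ j x0 t0 ≤ (∑ j, a i0 j x0 t0) * ψ i0 x0 t0 := by
    rw [Finset.sum_mul]
    apply Finset.sum_le_sum
    intro j _
    rcases eq_or_ne j i0 with rfl | hj
    · exact le_refl _
    · exact mul_le_mul_of_nonpos_left (hminv j x0 hx0 t0 ht0)
        (ha_off i0 j (Ne.symm hj) x0 hx0 t0 ht0)
  have hαsum := hα i0 x0 hx0 t0 ht0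
  have hsneg : (∑ j, a i0 j x0 t0) * ψ i0 x0 t0 < 0 :=
    mul_neg_of_pos_of_neg (hα0.trans hαsum) hms
  nlinarith [mul_nonneg (hε0 i0).le hψxx_ge]
end

section
/- Stability estimate for the Robin problem: If ψ = (ψ₁,…,ψₙ) is any vector-valued function in the domain of L, then for each i, 1 ≤ i ≤ n, and each (x,t) ∈ Ω̄, |ψ_i(x,t)| ≤ max { sup_{t∈[0,T]} max_i |(β₀ψ)_i(0,t)|, sup_{t∈[0,T]} max_i |(β₁ψ)_i(1,t)|, sup_{x∈[0,1]} max_i |ψ_i(x,0)|, (1/α)·sup_{(x,t)∈Ω} max_i |(Lψ)_i(x,t)| }. -/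
/-! At a point where the largest of the |ψⱼ| over Ω̄ is attained, say |ψₖ(y,s)| with sign σ,
the function u = σψ is maximal over all components. If s = 0 the initial bound applies. If
y = 0 (resp. y = 1) the one-sided derivative σ ∂ₓψₖ is ≤ 0 (resp. ≥ 0), so u ≤ σ(β₀ψ)ₖ
(resp. σ(β₁ψ)ₖ). In the interior ∂ₜuₖ ≥ 0 and ∂ₓ²uₖ ≤ 0, while aₖⱼ ≤ 0 for j ≠ k and
uⱼ ≤ uₖ give α uₖ ≤ Σⱼ aₖⱼ uⱼ; together α uₖ ≤ σ(Lψ)ₖ. -/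

open Set Filter Topology

theorem IsMaxOn.hasDerivWithinAt_nonpos_of_Icc_left {f : ℝ → ℝ} {d p q : ℝ} (hpq : p < q)
    (hmax : IsMaxOn f (Icc p q) p) (hf : HasDerivWithinAt f d (Icc p q) p) : d ≤ 0 := by
  have hdir : q - p ∈ posTangentConeAt (Icc p q) p :=
    sub_mem_posTangentConeAt_of_segment_subset (segment_eq_Icc hpq.le).subset
  have h := hmax.localize.hasFDerivWithinAt_nonpos hf.hasFDerivWithinAt hdir
  simp only [ContinuousLinearMap.toSpanSingleton_apply, smul_eq_mul] at h
  nlinarith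

theorem IsMaxOn.hasDerivWithinAt_nonneg_of_Icc_right {f : ℝ → ℝ} {d p q : ℝ} (hpq : p < q)
    (hmax : IsMaxOn f (Icc p q) q) (hf : HasDerivWithinAt f d (Icc p q) q) : 0 ≤ d := by
  have hdir : p - q ∈ posTangentConeAt (Icc p q) q :=
    sub_mem_posTangentConeAt_of_segment_subset (by rw [segment_symm, segment_eq_Icc hpq.le])
  have h := hmax.localize.hasFDerivWithinAt_nonpos hf.hasFDerivWithinAt hdir
  simp only [ContinuousLinearMap.toSpanSingleton_apply, smul_eq_mul] at h
  nlinarith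

theorem IsLocalMax.nonpos_of_hasDerivAt_deriv {f f' : ℝ → ℝ} {x₀ f'' : ℝ}
    (hmax : IsLocalMax f x₀) (hf : ∀ᶠ x in 𝓝 x₀, HasDerivAt f (f' x) x)
    (hf' : HasDerivAt f' f'' x₀) : f'' ≤ 0 := by
  by_contra! hpos
  have hf'x₀ : f' x₀ = 0 := hmax.hasDerivAt_eq_zero hf.self_of_nhds
  have hright : ∀ᶠ x in 𝓝[>] x₀, 0 < f' x := by
    have hslope := (hasDerivAt_iff_tendsto_slope.1 hf').mono_left (nhdsGT_le_nhdsNE x₀)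
    filter_upwards [hslope.eventually (eventually_gt_nhds hpos), self_mem_nhdsWithin]
      with x hslope hx
    exact pos_of_slope_pos hx hslope hf'x₀
  obtain ⟨b, hb, hsub⟩ := mem_nhdsGT_iff_exists_Ioo_subset.1
    (hright.and (nhdsWithin_le_nhds (hf.and hmax)))
  obtain ⟨y, hy⟩ := nonempty_Ioo.2 (mem_Ioi.1 hb)
  have hcont : ContinuousOn f (Icc x₀ y) := fun x hx =>
    (hx.1.eq_or_lt.elim (fun h => h ▸ hf.self_of_nhds)
      fun h => (hsub ⟨h, hx.2.trans_lt hy.2⟩).2.1).continuousAt.continuousWithinAt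
  obtain ⟨c, hc, hslope⟩ := exists_hasDerivAt_eq_slope f f' hy.1 hcont
    fun x hx => (hsub ⟨hx.1, hx.2.trans hy.2⟩).2.1
  have hfc : 0 < f' c := (hsub ⟨hc.1, hc.2.trans hy.2⟩).1
  rw [hslope, div_pos_iff_of_pos_right (sub_pos.2 hy.1), sub_pos] at hfc
  exact (hsub hy).2.2.not_gt hfc

theorem mul_le_sum_mul_of_forall_le {ι : Type*} [Fintype ι] {a v : ι → ℝ} {k : ι} {α : ℝ}
    (hv : ∀ j, v j ≤ v k) (hvk : 0 ≤ v k) (ha : ∀ j ≠ k, a j ≤ 0) (hα : α ≤ ∑ j, a j) :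
    α * v k ≤ ∑ j, a j * v j :=
  calc α * v k ≤ (∑ j, a j) * v k := mul_le_mul_of_nonneg_right hα hvk
    _ = ∑ j, a j * v k := Finset.sum_mul _ _ _
    _ ≤ ∑ j, a j * v j := Finset.sum_le_sum fun j _ => by
        rcases eq_or_ne j k with rfl | hj
        · rfl
        · exact mul_le_mul_of_nonpos_left (hv j) (ha j hj)

theorem IsCompact.exists_forall_le_of_finite {ι X : Type*} [Finite ι] [Nonempty ι]
    [TopologicalSpace X] {K : Set X} (hK : IsCompact K) (hne : K.Nonempty) {f : ι → X → ℝ}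
    (hf : ∀ i, ContinuousOn (f i) K) : ∃ k, ∃ p ∈ K, ∀ i, ∀ q ∈ K, f i q ≤ f k p := by
  let : TopologicalSpace ι := ⊥
  have : DiscreteTopology ι := ⟨rfl⟩
  obtain ⟨⟨k, p⟩, ⟨-, hp⟩, hmax⟩ := (isCompact_univ.prod hK).exists_isMaxOn
    (f := fun q : ι × X => f q.1 q.2) (univ_nonempty.prod hne)
    (continuousOn_prod_of_discrete_left.2 fun i => (hf i).mono fun _ hq => (mem_prod.1 hq).2)
  exact ⟨k, p, hp, fun i q hq => hmax (mk_mem_prod (mem_univ i) hq)⟩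

theorem exists_abs_eq_one_mul_eq_abs (y : ℝ) : ∃ σ : ℝ, |σ| = 1 ∧ σ * y = |y| := by
  rcases abs_cases y with ⟨h, -⟩ | ⟨h, -⟩
  · exact ⟨1, abs_one, by rw [h, one_mul]⟩
  · exact ⟨-1, by simp, by rw [h]; ring⟩

theorem mul_le_reactionDiffusion_of_isMax {ι : Type*} [Fintype ι] {u : ι → ℝ → ℝ → ℝ}
    {ux : ℝ → ℝ} {a : ι → ℝ} {k : ι} {T y s ut uxx e α : ℝ} (hy : y ∈ Ioo 0 1) (hs : s ∈ Ioc 0 T)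
    (hmax : ∀ j, ∀ x ∈ Icc (0:ℝ) 1, ∀ t ∈ Icc 0 T, u j x t ≤ u k y s) (hpos : 0 ≤ u k y s)
    (he : 0 ≤ e) (ha : ∀ j ≠ k, a j ≤ 0) (hα : α ≤ ∑ j, a j)
    (hut : HasDerivWithinAt (u k y ·) ut (Icc 0 T) s)
    (hux : ∀ x ∈ Ioo (0:ℝ) 1, HasDerivAt (u k · s) (ux x) x) (huxx : HasDerivAt ux uxx y) :
    α * u k y s ≤ ut - e * uxx + ∑ j, a j * u j y s := by
  have hs' : s ∈ Icc 0 T := Ioc_subset_Icc_self hs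
  have hut_nonneg : 0 ≤ ut := IsMaxOn.hasDerivWithinAt_nonneg_of_Icc_right hs.1
    (fun t ht => hmax k y (Ioo_subset_Icc_self hy) t ⟨ht.1, ht.2.trans hs.2⟩)
    (hut.mono (Icc_subset_Icc_right hs.2))
  have huxx_nonpos : uxx ≤ 0 := IsLocalMax.nonpos_of_hasDerivAt_deriv
    (mem_of_superset (Icc_mem_nhds hy.1 hy.2) fun x hx => hmax k x hx s hs')
    (mem_of_superset (Ioo_mem_nhds hy.1 hy.2) hux) huxx
  have hrow : α * u k y s ≤ ∑ j, a j * u j y s :=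
    mul_le_sum_mul_of_forall_le (v := (u · y s))
      (fun j => hmax j y (Ioo_subset_Icc_self hy) s hs') hpos ha hα
  nlinarith

theorem stmt_1_general
    (n : ℕ) (T : ℝ)
    (ε : Fin (n + 1) → ℝ)
    (hε0 : ∀ i, 0 < ε i)
    (a : Fin (n + 1) → Fin (n + 1) → ℝ → ℝ → ℝ)
    (ha_off : ∀ i j, i ≠ j → ∀ x ∈ Set.Icc (0:ℝ) 1, ∀ t ∈ Set.Icc (0:ℝ) T,
      a i j x t ≤ 0)
    (α : ℝ) (hα0 : 0 < α)
    (hα : ∀ i, ∀ x ∈ Set.Icc (0:ℝ) 1, ∀ t ∈ Set.Icc (0:ℝ) T, α < ∑ j, a i j x t)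
    (ψ ψx ψt ψxx : Fin (n + 1) → ℝ → ℝ → ℝ)
    -- ψ is in the domain of L :
    (hψ_cont : ∀ i, ContinuousOn (fun p : ℝ × ℝ => ψ i p.1 p.2)
      (Set.Icc 0 1 ×ˢ Set.Icc 0 T))
    (hψx : ∀ i, ∀ t ∈ Set.Icc (0:ℝ) T, ∀ x ∈ Set.Icc (0:ℝ) 1,
      HasDerivWithinAt (fun y => ψ i y t) (ψx i x t) (Set.Icc 0 1) x)
    (hψt : ∀ i, ∀ x ∈ Set.Ioo (0:ℝ) 1, ∀ t ∈ Set.Ioc (0:ℝ) T,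
      HasDerivWithinAt (fun s => ψ i x s) (ψt i x t) (Set.Icc 0 T) t)
    (hψxx : ∀ i, ∀ t ∈ Set.Ioc (0:ℝ) T, ∀ x ∈ Set.Ioo (0:ℝ) 1,
      HasDerivWithinAt (fun y => ψx i y t) (ψxx i x t) (Set.Ioo 0 1) x)
    -- arbitrary upper bounds for the four suprema :
    (b0 b1 bB bL : ℝ)
    (hb0 : ∀ i, ∀ t ∈ Set.Icc (0:ℝ) T, |ψ i 0 t - Real.sqrt (ε i) * ψx i 0 t| ≤ b0)
    (hb1 : ∀ i, ∀ t ∈ Set.Icc (0:ℝ) T, |ψ i 1 t + Real.sqrt (ε i) * ψx i 1 t| ≤ b1)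
    (hbB : ∀ i, ∀ x ∈ Set.Icc (0:ℝ) 1, |ψ i x 0| ≤ bB)
    (hbL : ∀ i, ∀ x ∈ Set.Ioo (0:ℝ) 1, ∀ t ∈ Set.Ioc (0:ℝ) T,
      |ψt i x t - ε i * ψxx i x t + ∑ j, a i j x t * ψ j x t| ≤ bL) :
    ∀ i, ∀ x ∈ Set.Icc (0:ℝ) 1, ∀ t ∈ Set.Icc (0:ℝ) T,
      |ψ i x t| ≤ max (max b0 b1) (max bB (bL / α)) := by
  intro i x hx t ht
  obtain ⟨k, ⟨y, s⟩, ⟨hy, hs⟩, hmax⟩ :=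
    (isCompact_Icc.prod isCompact_Icc).exists_forall_le_of_finite ⟨(x, t), hx, ht⟩
      fun j => (hψ_cont j).abs
  obtain ⟨σ, hσ, hσψ⟩ := exists_abs_eq_one_mul_eq_abs (ψ k y s)
  have hσle : ∀ {z b : ℝ}, |z| ≤ b → σ * z ≤ b := fun h =>
    (le_abs_self _).trans (by rwa [abs_mul, hσ, one_mul])
  have hu : ∀ j, ∀ x ∈ Icc (0:ℝ) 1, ∀ t ∈ Icc 0 T, σ * ψ j x t ≤ σ * ψ k y s :=
    fun j x hx t ht => (hσle le_rfl).trans ((hmax j (x, t) ⟨hx, ht⟩).trans_eq hσψ.symm)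
  refine (hmax i (x, t) ⟨hx, ht⟩).trans (hσψ ▸ ?_)
  rcases hs.1.eq_or_lt with rfl | hs0
  · exact le_max_of_le_right (le_max_of_le_left (hσle (hbB k y hy)))
  rcases hy.1.eq_or_lt with rfl | hy0
  · have hd := IsMaxOn.hasDerivWithinAt_nonpos_of_Icc_left zero_lt_one
      (fun x hx => hu k x hx s hs) ((hψx k s hs 0 hy).const_mul σ)
    refine le_max_of_le_left (le_max_of_le_left (le_trans ?_ (hσle (hb0 k s hs))))
    nlinarith [Real.sqrt_nonneg (ε k)]
  rcases hy.2.eq_or_lt with rfl | hy1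
  · have hd := IsMaxOn.hasDerivWithinAt_nonneg_of_Icc_right zero_lt_one
      (fun x hx => hu k x hx s hs) ((hψx k s hs 1 hy).const_mul σ)
    refine le_max_of_le_left (le_max_of_le_right (le_trans ?_ (hσle (hb1 k s hs))))
    nlinarith [Real.sqrt_nonneg (ε k)]
  have hyI : y ∈ Ioo 0 1 := ⟨hy0, hy1⟩
  have hsI : s ∈ Ioc 0 T := ⟨hs0, hs.2⟩
  have hmain := mul_le_reactionDiffusion_of_isMax (u := fun j x t => σ * ψ j x t) hyI hsI hu
    (hσψ ▸ abs_nonneg _) (hε0 k).le (fun j hj => ha_off k j hj.symm y hy s hs) (hα k y hy s hs).le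
    ((hψt k y hyI s hsI).const_mul σ)
    (fun x hx => ((hψx k s hs x (Ioo_subset_Icc_self hx)).const_mul σ).hasDerivAt
      (Icc_mem_nhds hx.1 hx.2))
    (((hψxx k s hsI y hyI).const_mul σ).hasDerivAt (Ioo_mem_nhds hy0 hy1))
  have hL : σ * (ψt k y s - ε k * ψxx k y s + ∑ j, a k j y s * ψ j y s)
      = σ * ψt k y s - ε k * (σ * ψxx k y s) + ∑ j, a k j y s * (σ * ψ j y s) := by
    simp only [mul_add, mul_sub, Finset.mul_sum, mul_left_comm σ]
  refine le_max_of_le_right (le_max_of_le_right ((le_div_iff₀ hα0).2 ?_))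
  rw [mul_comm]
  exact hmain.trans (hL ▸ hσle (hbL k y hyI s hsI))

theorem stmt_1
    (n : ℕ) (T : ℝ) (hT : 0 < T)
    (ε : Fin (n + 1) → ℝ)
    (hε0 : ∀ i, 0 < ε i) (hε1 : ∀ i, ε i < 1) (hεm : StrictMono ε)
    (a : Fin (n + 1) → Fin (n + 1) → ℝ → ℝ → ℝ)
    (ha_cont : ∀ i j, ContinuousOn (fun p : ℝ × ℝ => a i j p.1 p.2)
      (Set.Icc 0 1 ×ˢ Set.Icc 0 T))
    (ha_diag : ∀ i, ∀ x ∈ Set.Icc (0:ℝ) 1, ∀ t ∈ Set.Icc (0:ℝ) T,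
      ∑ j ∈ Finset.univ.erase i, |a i j x t| < a i i x t)
    (ha_off : ∀ i j, i ≠ j → ∀ x ∈ Set.Icc (0:ℝ) 1, ∀ t ∈ Set.Icc (0:ℝ) T,
      a i j x t ≤ 0)
    (α : ℝ) (hα0 : 0 < α)
    (hα : ∀ i, ∀ x ∈ Set.Icc (0:ℝ) 1, ∀ t ∈ Set.Icc (0:ℝ) T, α < ∑ j, a i j x t)
    (ψ ψx ψt ψxx : Fin (n + 1) → ℝ → ℝ → ℝ)
    -- ψ is in the domain of L :
    (hψ_cont : ∀ i, ContinuousOn (fun p : ℝ × ℝ => ψ i p.1 p.2)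
      (Set.Icc 0 1 ×ˢ Set.Icc 0 T))
    (hψx_cont : ∀ i, ContinuousOn (fun p : ℝ × ℝ => ψx i p.1 p.2)
      (Set.Icc 0 1 ×ˢ Set.Icc 0 T))
    (hψx : ∀ i, ∀ t ∈ Set.Icc (0:ℝ) T, ∀ x ∈ Set.Icc (0:ℝ) 1,
      HasDerivWithinAt (fun y => ψ i y t) (ψx i x t) (Set.Icc 0 1) x)
    (hψt : ∀ i, ∀ x ∈ Set.Ioo (0:ℝ) 1, ∀ t ∈ Set.Ioc (0:ℝ) T,
      HasDerivWithinAt (fun s => ψ i x s) (ψt i x t) (Set.Icc 0 T) t)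
    (hψxx : ∀ i, ∀ t ∈ Set.Ioc (0:ℝ) T, ∀ x ∈ Set.Ioo (0:ℝ) 1,
      HasDerivWithinAt (fun y => ψx i y t) (ψxx i x t) (Set.Ioo 0 1) x)
    (hψt_cont : ∀ i, ContinuousOn (fun p : ℝ × ℝ => ψt i p.1 p.2)
      (Set.Ioo 0 1 ×ˢ Set.Ioc 0 T))
    (hψxx_cont : ∀ i, ContinuousOn (fun p : ℝ × ℝ => ψxx i p.1 p.2)
      (Set.Ioo 0 1 ×ˢ Set.Ioc 0 T))
    -- arbitrary upper bounds for the four suprema :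
    (b0 b1 bB bL : ℝ)
    (hb0 : ∀ i, ∀ t ∈ Set.Icc (0:ℝ) T, |ψ i 0 t - Real.sqrt (ε i) * ψx i 0 t| ≤ b0)
    (hb1 : ∀ i, ∀ t ∈ Set.Icc (0:ℝ) T, |ψ i 1 t + Real.sqrt (ε i) * ψx i 1 t| ≤ b1)
    (hbB : ∀ i, ∀ x ∈ Set.Icc (0:ℝ) 1, |ψ i x 0| ≤ bB)
    (hbL : ∀ i, ∀ x ∈ Set.Ioo (0:ℝ) 1, ∀ t ∈ Set.Ioc (0:ℝ) T,
      |ψt i x t - ε i * ψxx i x t + ∑ j, a i j x t * ψ j x t| ≤ bL) :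
    ∀ i, ∀ x ∈ Set.Icc (0:ℝ) 1, ∀ t ∈ Set.Icc (0:ℝ) T,
      |ψ i x t| ≤ max (max b0 b1) (max bB (bL / α)) :=
  stmt_1_general n T ε hε0 a ha_off α hα0 hα ψ ψx ψt ψxx hψ_cont hψx hψt hψxx b0 b1 bB bL hb0 hb1
    hbB hbL
end

section
/- Stability estimate for the partially degenerate operator L̂: Let ψ = (ψ₁,…,ψₙ) be a vector-valued function such that every ψ_i is continuous on Ω̄ with ∂ψ_i/∂t continuous on Ω, and ψₙ additionally has ∂ψₙ/∂x continuous on Ω̄ and ∂²ψₙ/∂x² continuous on Ω. Then for each i = 1,…,n and each (x,t) ∈ Ω̄: |ψ_i(x,t)| ≤ max { sup_{t∈[0,T]} |(b₀ψₙ)(0,t)|, sup_{t∈[0,T]} |(b₁ψₙ)(1,t)|, sup_{x∈[0,1]} max_i |ψ_i(x,0)|, (1/α)·sup_{(x,t)∈Ω} max_i |(L̂ψ)_i(x,t)| }. -/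
open Set Filter Topology


/-- derivative within Icc at a max point with t0 > 0 is nonneg -/
lemma aux_deriv_nonneg (f : ℝ → ℝ) (c T t0 : ℝ) (ht : t0 ∈ Set.Ioc 0 T)
    (h : HasDerivWithinAt f c (Set.Icc 0 T) t0)
    (hmax : ∀ s ∈ Set.Icc 0 T, f s ≤ f t0) : 0 ≤ c := by
  have hne : (𝓝[Set.Ioo 0 t0] t0).NeBot := right_nhdsWithin_Ioo_neBot ht.1
  have h1 : Tendsto (slope f t0) (𝓝[Set.Ioo 0 t0] t0) (𝓝 c) := by
    refine (hasDerivWithinAt_iff_tendsto_slope.mp h).mono_left (nhdsWithin_mono _ ?_)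
    intro s hs
    exact ⟨⟨hs.1.le, hs.2.le.trans ht.2⟩, ne_of_lt hs.2⟩
  refine ge_of_tendsto h1 ?_
  filter_upwards [self_mem_nhdsWithin] with s hs
  rw [slope_def_field, div_eq_mul_inv]
  have h2 : f s - f t0 ≤ 0 := sub_nonpos.mpr (hmax s ⟨hs.1.le, hs.2.le.trans ht.2⟩)
  have h3 : s - t0 < 0 := sub_neg.mpr hs.2
  exact mul_nonneg_of_nonpos_of_nonpos h2 (inv_nonpos.mpr h3.le)

/-- x-derivative within Icc 0 1 at left endpoint max is nonpos -/
lemma aux_deriv_nonpos_left (f : ℝ → ℝ) (c : ℝ)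
    (h : HasDerivWithinAt f c (Set.Icc 0 1) 0)
    (hmax : ∀ y ∈ Set.Icc (0:ℝ) 1, f y ≤ f 0) : c ≤ 0 := by
  have hne : (𝓝[Set.Ioo (0:ℝ) 1] 0).NeBot := left_nhdsWithin_Ioo_neBot one_pos
  have h1 : Tendsto (slope f 0) (𝓝[Set.Ioo (0:ℝ) 1] 0) (𝓝 c) := by
    refine (hasDerivWithinAt_iff_tendsto_slope.mp h).mono_left (nhdsWithin_mono _ ?_)
    intro s hs
    exact ⟨⟨hs.1.le, hs.2.le⟩, ne_of_gt hs.1⟩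
  refine le_of_tendsto h1 ?_
  filter_upwards [self_mem_nhdsWithin] with s hs
  rw [slope_def_field]
  have h2 : f s - f 0 ≤ 0 := sub_nonpos.mpr (hmax s ⟨hs.1.le, hs.2.le⟩)
  have h3 : (0:ℝ) < s - 0 := by simpa using hs.1
  exact div_nonpos_of_nonpos_of_nonneg h2 h3.le

/-- x-derivative within Icc 0 1 at right endpoint max is nonneg -/
lemma aux_deriv_nonneg_right (f : ℝ → ℝ) (c : ℝ)
    (h : HasDerivWithinAt f c (Set.Icc 0 1) 1)
    (hmax : ∀ y ∈ Set.Icc (0:ℝ) 1, f y ≤ f 1) : 0 ≤ c := by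
  have hne : (𝓝[Set.Ioo (0:ℝ) 1] 1).NeBot := right_nhdsWithin_Ioo_neBot one_pos
  have h1 : Tendsto (slope f 1) (𝓝[Set.Ioo (0:ℝ) 1] 1) (𝓝 c) := by
    refine (hasDerivWithinAt_iff_tendsto_slope.mp h).mono_left (nhdsWithin_mono _ ?_)
    intro s hs
    exact ⟨⟨hs.1.le, hs.2.le⟩, ne_of_lt hs.2⟩
  refine ge_of_tendsto h1 ?_
  filter_upwards [self_mem_nhdsWithin] with s hs
  rw [slope_def_field, div_eq_mul_inv]
  have h2 : f s - f 1 ≤ 0 := sub_nonpos.mpr (hmax s ⟨hs.1.le, hs.2.le⟩)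
  have h3 : s - 1 < 0 := sub_neg.mpr hs.2
  exact mul_nonneg_of_nonpos_of_nonpos h2 (inv_nonpos.mpr h3.le)


/-- second derivative at an interior max is nonpositive -/
lemma aux_second_nonpos (f g : ℝ → ℝ) (c x1 : ℝ) (hx1 : x1 ∈ Set.Ioo (0:ℝ) 1)
    (hf : ∀ x ∈ Set.Icc (0:ℝ) 1, HasDerivWithinAt f (g x) (Set.Icc 0 1) x)
    (hg : HasDerivWithinAt g c (Set.Ioo 0 1) x1)
    (hg0 : g x1 = 0)
    (hmax : ∀ x ∈ Set.Icc (0:ℝ) 1, f x ≤ f x1) : c ≤ 0 := by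
  by_contra hc
  push_neg at hc
  have hne : (𝓝[Set.Ioo x1 1] x1).NeBot := left_nhdsWithin_Ioo_neBot hx1.2
  have h1 : Tendsto (slope g x1) (𝓝[Set.Ioo x1 1] x1) (𝓝 c) := by
    refine (hasDerivWithinAt_iff_tendsto_slope.mp hg).mono_left (nhdsWithin_mono _ ?_)
    intro s hs
    exact ⟨⟨lt_trans hx1.1 hs.1, hs.2⟩, ne_of_gt hs.1⟩
  have h2 : ∀ᶠ y in 𝓝[Set.Ioo x1 1] x1, 0 < slope g x1 y :=
    h1.eventually (eventually_gt_nhds hc)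
  rw [eventually_nhdsWithin_iff, Metric.eventually_nhds_iff] at h2
  obtain ⟨ε, hε, hball⟩ := h2
  set b : ℝ := min (x1 + ε / 2) ((x1 + 1) / 2) with hb
  have hx1b : x1 < b := by
    apply lt_min (by linarith) (by nlinarith [hx1.2])
  have hb1 : b < 1 := lt_of_le_of_lt (min_le_right _ _) (by nlinarith [hx1.2])
  have hbx1e : b - x1 < ε := by
    have : b ≤ x1 + ε / 2 := min_le_left _ _
    linarith
  have hgpos : ∀ y ∈ Set.Ioo x1 b, 0 < g y := by
    intro y hy
    have hydist : dist y x1 < ε := by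
      rw [Real.dist_eq, abs_of_pos (by linarith [hy.1] : (0:ℝ) < y - x1)]
      linarith [hy.2]
    have hsl := hball hydist ⟨hy.1, lt_trans hy.2 hb1⟩
    rw [slope_def_field, hg0, sub_zero] at hsl
    have hyx : 0 < y - x1 := by linarith [hy.1]
    have := mul_pos hsl hyx
    rwa [div_mul_cancel₀ _ (ne_of_gt hyx)] at this
  have hsub : Set.Icc x1 b ⊆ Set.Icc (0:ℝ) 1 := Set.Icc_subset_Icc hx1.1.le hb1.le
  have hcont : ContinuousOn f (Set.Icc x1 b) := fun y hy =>
    ((hf y (hsub hy)).continuousWithinAt).mono hsub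
  have hmono : StrictMonoOn f (Set.Icc x1 b) := by
    apply strictMonoOn_of_deriv_pos (convex_Icc x1 b) hcont
    intro y hy
    rw [interior_Icc] at hy
    have hy01 : y ∈ Set.Ioo (0:ℝ) 1 := ⟨lt_trans hx1.1 hy.1, lt_trans hy.2 hb1⟩
    have hda : HasDerivAt f (g y) y :=
      (hf y (Set.Ioo_subset_Icc_self hy01)).hasDerivAt (Icc_mem_nhds hy01.1 hy01.2)
    rw [hda.deriv]
    exact hgpos y hy
  have h5 : f x1 < f b := hmono (Set.left_mem_Icc.mpr hx1b.le) (Set.right_mem_Icc.mpr hx1b.le) hx1b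
  have h6 := hmax b ⟨le_trans hx1.1.le hx1b.le, hb1.le⟩
  linarith

lemma aux_oneSided
    (n : ℕ) (T : ℝ) (hT : 0 < T)
    (εn : ℝ) (hεn0 : 0 < εn)
    (a : Fin (n + 1) → Fin (n + 1) → ℝ → ℝ → ℝ)
    (ha_off : ∀ i j, i ≠ j → ∀ x ∈ Set.Icc (0:ℝ) 1, ∀ t ∈ Set.Icc (0:ℝ) T,
      a i j x t ≤ 0)
    (α : ℝ) (hα0 : 0 < α)
    (hα : ∀ i, ∀ x ∈ Set.Icc (0:ℝ) 1, ∀ t ∈ Set.Icc (0:ℝ) T, α < ∑ j, a i j x t)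
    (ψ ψt : Fin (n + 1) → ℝ → ℝ → ℝ) (ψx ψxx : ℝ → ℝ → ℝ)
    (hψ_cont : ∀ i, ContinuousOn (fun p : ℝ × ℝ => ψ i p.1 p.2)
      (Set.Icc 0 1 ×ˢ Set.Icc 0 T))
    (hψt : ∀ i, ∀ x ∈ Set.Ioo (0:ℝ) 1, ∀ t ∈ Set.Ioc (0:ℝ) T,
      HasDerivWithinAt (fun s => ψ i x s) (ψt i x t) (Set.Icc 0 T) t)
    (hψx : ∀ t ∈ Set.Icc (0:ℝ) T, ∀ x ∈ Set.Icc (0:ℝ) 1,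
      HasDerivWithinAt (fun y => ψ (Fin.last n) y t) (ψx x t) (Set.Icc 0 1) x)
    (hψxx : ∀ t ∈ Set.Ioc (0:ℝ) T, ∀ x ∈ Set.Ioo (0:ℝ) 1,
      HasDerivWithinAt (fun y => ψx y t) (ψxx x t) (Set.Ioo 0 1) x)
    (b0 b1 bB bL : ℝ) (hbB0 : 0 ≤ bB)
    (hb0 : ∀ t ∈ Set.Icc (0:ℝ) T,
      ψ (Fin.last n) 0 t - Real.sqrt εn * ψx 0 t ≤ b0)
    (hb1 : ∀ t ∈ Set.Icc (0:ℝ) T,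
      ψ (Fin.last n) 1 t + Real.sqrt εn * ψx 1 t ≤ b1)
    (hbB : ∀ i, ∀ x ∈ Set.Icc (0:ℝ) 1, ψ i x 0 ≤ bB)
    (hbL1 : ∀ i, i ≠ Fin.last n → ∀ x ∈ Set.Ioo (0:ℝ) 1, ∀ t ∈ Set.Ioc (0:ℝ) T,
      ψt i x t + ∑ j, a i j x t * ψ j x t ≤ bL)
    (hbLn : ∀ x ∈ Set.Ioo (0:ℝ) 1, ∀ t ∈ Set.Ioc (0:ℝ) T,
      ψt (Fin.last n) x t - εn * ψxx x t +
        ∑ j, a (Fin.last n) j x t * ψ j x t ≤ bL) :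
    ∀ i, ∀ x ∈ Set.Icc (0:ℝ) 1, ∀ t ∈ Set.Icc (0:ℝ) T,
      ψ i x t ≤ max (max b0 b1) (max bB (bL / α)) := by
  set M := max (max b0 b1) (max bB (bL / α)) with hMdef
  have hbBM : bB ≤ M := le_trans (le_max_left _ _) (le_max_right _ _)
  have hbLM : bL / α ≤ M := le_trans (le_max_right _ _) (le_max_right _ _)
  have hb0M : b0 ≤ M := le_trans (le_max_left _ _) (le_max_left _ _)
  have hb1M : b1 ≤ M := le_trans (le_max_right _ _) (le_max_left _ _)
  have hM0 : 0 ≤ M := le_trans hbB0 hbBM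
  -- reduce to a δ-perturbed bound
  suffices hδbound : ∀ δ : ℝ, 0 < δ → ∀ i, ∀ x ∈ Set.Icc (0:ℝ) 1,
      ∀ t ∈ Set.Icc (0:ℝ) T, ψ i x t ≤ M + δ * T by
    intro i x hx t ht
    refine le_of_forall_pos_le_add fun ε hε => ?_
    have h := hδbound (ε / T) (div_pos hε hT) i x hx t ht
    rwa [div_mul_cancel₀ _ (ne_of_gt hT)] at h
  intro δ hδ0
  -- derivative of the perturbed function in t
  have hderiv : ∀ i, ∀ x ∈ Set.Ioo (0:ℝ) 1, ∀ t ∈ Set.Ioc (0:ℝ) T,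
      HasDerivWithinAt (fun s => ψ i x s - δ * s) (ψt i x t - δ) (Set.Icc 0 T) t := by
    intro i x hx t ht
    exact (hψt i x hx t ht).sub (by simpa using ((hasDerivAt_id t).const_mul δ).hasDerivWithinAt)
  have hcont1 : ∀ i, ∀ t ∈ Set.Icc (0:ℝ) T,
      ContinuousOn (fun y => ψ i y t) (Set.Icc (0:ℝ) 1) := by
    intro i t ht
    exact (hψ_cont i).comp ((continuous_id.prodMk continuous_const).continuousOn)
      (fun y hy => ⟨hy, ht⟩)
  have hcont2 : ∀ i, ∀ x ∈ Set.Icc (0:ℝ) 1,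
      ContinuousOn (fun s => ψ i x s - δ * s) (Set.Icc (0:ℝ) T) := by
    intro i x hx
    exact ((hψ_cont i).comp ((continuous_const.prodMk continuous_id).continuousOn)
      (fun s hs => ⟨hx, hs⟩)).sub ((continuous_const.mul continuous_id).continuousOn)
  -- key ODE estimate for non-last components at a per-line maximum
  have keyODE : ∀ x ∈ Set.Ioo (0:ℝ) 1, ∀ i, i ≠ Fin.last n → ∀ t0 ∈ Set.Icc (0:ℝ) T,
      (∀ s ∈ Set.Icc (0:ℝ) T, ψ i x s - δ * s ≤ ψ i x t0 - δ * t0) →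
      (∀ j, ψ j x t0 ≤ ψ i x t0) →
      ψ i x t0 - δ * t0 ≤ max bB (bL / α) := by
    intro x hx i hi t0 ht0 hmaxt hmaxj
    have hxI : x ∈ Set.Icc (0:ℝ) 1 := Set.Ioo_subset_Icc_self hx
    have hδt0 : 0 ≤ δ * t0 := mul_nonneg hδ0.le ht0.1
    rcases eq_or_lt_of_le ht0.1 with h0 | h0
    · have : ψ i x t0 ≤ bB := by rw [← h0]; exact hbB i x hxI
      have : ψ i x t0 - δ * t0 ≤ bB := by linarith
      exact le_trans this (le_max_left _ _)
    · by_cases hP : ψ i x t0 ≤ 0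
      · refine le_trans ?_ (le_max_left _ _)
        linarith
      · push_neg at hP
        have hIoc : t0 ∈ Set.Ioc 0 T := ⟨h0, ht0.2⟩
        have hd : 0 ≤ ψt i x t0 - δ :=
          aux_deriv_nonneg _ _ T t0 hIoc (hderiv i x hx t0 hIoc) hmaxt
        have hsum : α * ψ i x t0 ≤ ∑ j, a i j x t0 * ψ j x t0 := by
          have h1 : (∑ j, a i j x t0) * ψ i x t0 ≤ ∑ j, a i j x t0 * ψ j x t0 := by
            rw [Finset.sum_mul]
            apply Finset.sum_le_sum
            intro j _
            rcases eq_or_ne j i with rfl | hne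
            · exact le_refl _
            · exact mul_le_mul_of_nonpos_left (hmaxj j)
                (ha_off i j (Ne.symm hne) x hxI t0 ht0)
          calc α * ψ i x t0 ≤ (∑ j, a i j x t0) * ψ i x t0 :=
                mul_le_mul_of_nonneg_right (hα i x hxI t0 ht0).le hP.le
            _ ≤ _ := h1
        have hL := hbL1 i hi x hx t0 hIoc
        have hαP : α * ψ i x t0 ≤ bL := by linarith
        have hPle : ψ i x t0 ≤ bL / α := (le_div_iff₀ hα0).mpr (by linarith [mul_comm α (ψ i x t0)])
        refine le_trans ?_ (le_max_right _ _)
        linarith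
  -- global maximum of the perturbed last component
  obtain ⟨⟨x1, t1⟩, hp1, hmax1⟩ :=
    (isCompact_Icc.prod isCompact_Icc).exists_isMaxOn
      (⟨((0:ℝ), (0:ℝ)), by exact ⟨Set.left_mem_Icc.mpr zero_le_one, Set.left_mem_Icc.mpr hT.le⟩⟩)
      (((hψ_cont (Fin.last n)).sub ((continuous_const.mul continuous_snd).continuousOn)) :
        ContinuousOn (fun p : ℝ × ℝ => ψ (Fin.last n) p.1 p.2 - δ * p.2) _)
  have hx1 : x1 ∈ Set.Icc (0:ℝ) 1 := hp1.1
  have ht1 : t1 ∈ Set.Icc (0:ℝ) T := hp1.2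
  set sL := ψ (Fin.last n) x1 t1 - δ * t1 with hsL
  have hmaxL : ∀ y ∈ Set.Icc (0:ℝ) 1, ∀ s ∈ Set.Icc (0:ℝ) T,
      ψ (Fin.last n) y s - δ * s ≤ sL := by
    intro y hy s hs
    exact hmax1 (Set.mk_mem_prod hy hs)
  -- Claim C : interior bound by max (max bB (bL/α)) sL
  have claimC : ∀ x ∈ Set.Ioo (0:ℝ) 1, ∀ i, ∀ t ∈ Set.Icc (0:ℝ) T,
      ψ i x t - δ * t ≤ max (max bB (bL / α)) sL := by
    intro x hx i t ht
    have hxI : x ∈ Set.Icc (0:ℝ) 1 := Set.Ioo_subset_Icc_self hx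
    choose ts hts hmaxts using fun j : Fin (n + 1) =>
      isCompact_Icc.exists_isMaxOn (⟨0, Set.left_mem_Icc.mpr hT.le⟩)
        (hcont2 j x hxI)
    obtain ⟨i0, _, hi0⟩ := Finset.exists_max_image Finset.univ
      (fun j => ψ j x (ts j) - δ * ts j) Finset.univ_nonempty
    have hjoint : ∀ j, ∀ s ∈ Set.Icc (0:ℝ) T,
        ψ j x s - δ * s ≤ ψ i0 x (ts i0) - δ * ts i0 := by
      intro j s hs
      exact le_trans (hmaxts j hs) (hi0 j (Finset.mem_univ j))
    rcases eq_or_ne i0 (Fin.last n) with hlast | hlast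
    · refine le_trans (hjoint i t ht) (le_trans ?_ (le_max_right _ _))
      rw [hlast]
      exact hmaxL x hxI (ts (Fin.last n)) (hts (Fin.last n))
    · refine le_trans (hjoint i t ht) (le_trans ?_ (le_max_left _ _))
      refine keyODE x hx i0 hlast (ts i0) (hts i0) (fun s hs => hjoint i0 s hs) ?_
      intro j
      have := hjoint j (ts i0) (hts i0)
      linarith
  -- Claim D : sL ≤ M
  have claimD : sL ≤ M := by
    by_contra hcon
    push_neg at hcon
    have ht1pos : 0 < t1 := by
      rcases eq_or_lt_of_le ht1.1 with h0 | h0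
      · exfalso
        have hb' : sL ≤ bB := by
          rw [hsL, ← h0]
          simpa using hbB _ x1 hx1
        linarith
      · exact h0
    have hIoc1 : t1 ∈ Set.Ioc 0 T := ⟨ht1pos, ht1.2⟩
    have hxmax : ∀ y ∈ Set.Icc (0:ℝ) 1, ψ (Fin.last n) y t1 ≤ ψ (Fin.last n) x1 t1 := by
      intro y hy
      have := hmaxL y hy t1 ht1
      rw [hsL] at this
      linarith
    have htmax : ∀ s ∈ Set.Icc (0:ℝ) T,
        ψ (Fin.last n) x1 s - δ * s ≤ ψ (Fin.last n) x1 t1 - δ * t1 :=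
      fun s hs => hmaxL x1 hx1 s hs
    have hPM : M < ψ (Fin.last n) x1 t1 := by
      have : 0 ≤ δ * t1 := mul_nonneg hδ0.le ht1.1
      rw [hsL] at hcon
      linarith
    rcases eq_or_lt_of_le hx1.1 with hxl | hxl
    · -- x1 = 0
      have hd : HasDerivWithinAt (fun y => ψ (Fin.last n) y t1) (ψx 0 t1) (Set.Icc 0 1) 0 :=
        hψx t1 ht1 0 (Set.left_mem_Icc.mpr zero_le_one)
      have hx0 : ψx 0 t1 ≤ 0 := by
        apply aux_deriv_nonpos_left _ _ hd
        intro y hy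
        rw [hxl]
        exact hxmax y hy
      have hb := hb0 t1 ht1
      have hs0 : 0 ≤ Real.sqrt εn := Real.sqrt_nonneg _
      have : Real.sqrt εn * ψx 0 t1 ≤ 0 := mul_nonpos_of_nonneg_of_nonpos hs0 hx0
      rw [← hxl] at hPM
      linarith
    rcases eq_or_lt_of_le hx1.2 with hxr | hxr
    · -- x1 = 1
      have hd : HasDerivWithinAt (fun y => ψ (Fin.last n) y t1) (ψx 1 t1) (Set.Icc 0 1) 1 :=
        hψx t1 ht1 1 (Set.right_mem_Icc.mpr zero_le_one)
      have hx0 : 0 ≤ ψx 1 t1 := by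
        apply aux_deriv_nonneg_right _ _ hd
        intro y hy
        rw [← hxr]
        exact hxmax y hy
      have hb := hb1 t1 ht1
      have hs0 : 0 ≤ Real.sqrt εn := Real.sqrt_nonneg _
      have : 0 ≤ Real.sqrt εn * ψx 1 t1 := mul_nonneg hs0 hx0
      rw [hxr] at hPM
      linarith
    · -- x1 interior
      have hIoo : x1 ∈ Set.Ioo (0:ℝ) 1 := ⟨hxl, hxr⟩
      have hd : 0 ≤ ψt (Fin.last n) x1 t1 - δ :=
        aux_deriv_nonneg _ _ T t1 hIoc1 (hderiv (Fin.last n) x1 hIoo t1 hIoc1) htmax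
      have hψx0 : ψx x1 t1 = 0 := by
        have hda : HasDerivAt (fun y => ψ (Fin.last n) y t1) (ψx x1 t1) x1 :=
          (hψx t1 ht1 x1 hx1).hasDerivAt (Icc_mem_nhds hIoo.1 hIoo.2)
        have hloc : IsLocalMax (fun y => ψ (Fin.last n) y t1) x1 :=
          Filter.eventually_of_mem (Icc_mem_nhds hIoo.1 hIoo.2) (fun y hy => hxmax y hy)
        exact hloc.hasDerivAt_eq_zero hda
      have hψxx0 : ψxx x1 t1 ≤ 0 :=
        aux_second_nonpos (fun y => ψ (Fin.last n) y t1) (fun y => ψx y t1) _ x1 hIoo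
          (fun y hy => hψx t1 ht1 y hy) (hψxx t1 hIoc1 x1 hIoo) hψx0 hxmax
      have hmaxj : ∀ j, ψ j x1 t1 ≤ ψ (Fin.last n) x1 t1 := by
        intro j
        have h1 := claimC x1 hIoo j t1 ht1
        have h2 : max (max bB (bL / α)) sL = sL :=
          max_eq_right (le_trans (max_le hbBM hbLM) hcon.le)
        rw [h2, hsL] at h1
        linarith
      have hP0 : 0 ≤ ψ (Fin.last n) x1 t1 := le_trans hM0 hPM.le
      have hsum : α * ψ (Fin.last n) x1 t1 ≤ ∑ j, a (Fin.last n) j x1 t1 * ψ j x1 t1 := by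
        have h1 : (∑ j, a (Fin.last n) j x1 t1) * ψ (Fin.last n) x1 t1
            ≤ ∑ j, a (Fin.last n) j x1 t1 * ψ j x1 t1 := by
          rw [Finset.sum_mul]
          apply Finset.sum_le_sum
          intro j _
          rcases eq_or_ne j (Fin.last n) with rfl | hne
          · exact le_refl _
          · exact mul_le_mul_of_nonpos_left (hmaxj j)
              (ha_off (Fin.last n) j (Ne.symm hne) x1 hx1 t1 ht1)
        calc α * ψ (Fin.last n) x1 t1 ≤ (∑ j, a (Fin.last n) j x1 t1) * ψ (Fin.last n) x1 t1 :=
              mul_le_mul_of_nonneg_right (hα (Fin.last n) x1 hx1 t1 ht1).le hP0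
          _ ≤ _ := h1
      have hL := hbLn x1 hIoo t1 hIoc1
      have hε0 : εn * ψxx x1 t1 ≤ 0 := mul_nonpos_of_nonneg_of_nonpos hεn0.le hψxx0
      have hbig : bL < α * ψ (Fin.last n) x1 t1 := by
        have h3 : bL / α < ψ (Fin.last n) x1 t1 := lt_of_le_of_lt hbLM hPM
        have := (div_lt_iff₀ hα0).mp h3
        linarith [mul_comm (ψ (Fin.last n) x1 t1) α]
      linarith
  -- conclusion
  have hMB : max (max bB (bL / α)) sL ≤ M := max_le (max_le hbBM hbLM) claimD
  have hInt : ∀ i, ∀ x ∈ Set.Ioo (0:ℝ) 1, ∀ t ∈ Set.Icc (0:ℝ) T,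
      ψ i x t ≤ M + δ * T := by
    intro i x hx t ht
    have h1 := le_trans (claimC x hx i t ht) hMB
    have h2 : δ * t ≤ δ * T := mul_le_mul_of_nonneg_left ht.2 hδ0.le
    linarith
  intro i x hx t ht
  have hclo : x ∈ closure (Set.Ioo (0:ℝ) 1) := by
    rw [closure_Ioo (zero_ne_one' ℝ)]
    exact hx
  have hne : (𝓝[Set.Ioo (0:ℝ) 1] x).NeBot := mem_closure_iff_nhdsWithin_neBot.mp hclo
  have htd : Tendsto (fun y => ψ i y t) (𝓝[Set.Ioo (0:ℝ) 1] x) (𝓝 (ψ i x t)) :=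
    ((hcont1 i t ht x hx).mono Set.Ioo_subset_Icc_self : ContinuousWithinAt _ _ _)
  refine le_of_tendsto htd ?_
  filter_upwards [self_mem_nhdsWithin] with y hy
  exact hInt i y hy t ht

/- STATEMENT 7: Stability estimate for the partially degenerate operator L̂.
The suprema in the estimate are rendered by quantifying over arbitrary
upper bounds `b0, b1, bB, bL`. -/
theorem stmt_7
    (n : ℕ) (T : ℝ) (hT : 0 < T)
    (εn : ℝ) (hεn0 : 0 < εn) (hεn1 : εn < 1)
    (a : Fin (n + 1) → Fin (n + 1) → ℝ → ℝ → ℝ)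
    (ha_cont : ∀ i j, ContinuousOn (fun p : ℝ × ℝ => a i j p.1 p.2)
      (Set.Icc 0 1 ×ˢ Set.Icc 0 T))
    (ha_diag : ∀ i, ∀ x ∈ Set.Icc (0:ℝ) 1, ∀ t ∈ Set.Icc (0:ℝ) T,
      ∑ j ∈ Finset.univ.erase i, |a i j x t| < a i i x t)
    (ha_off : ∀ i j, i ≠ j → ∀ x ∈ Set.Icc (0:ℝ) 1, ∀ t ∈ Set.Icc (0:ℝ) T,
      a i j x t ≤ 0)
    (α : ℝ) (hα0 : 0 < α)
    (hα : ∀ i, ∀ x ∈ Set.Icc (0:ℝ) 1, ∀ t ∈ Set.Icc (0:ℝ) T, α < ∑ j, a i j x t)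
    (ψ ψt : Fin (n + 1) → ℝ → ℝ → ℝ) (ψx ψxx : ℝ → ℝ → ℝ)
    -- regularity: every ψ i continuous on Ω̄ with ∂ₜψ i continuous on Ω :
    (hψ_cont : ∀ i, ContinuousOn (fun p : ℝ × ℝ => ψ i p.1 p.2)
      (Set.Icc 0 1 ×ˢ Set.Icc 0 T))
    (hψt : ∀ i, ∀ x ∈ Set.Ioo (0:ℝ) 1, ∀ t ∈ Set.Ioc (0:ℝ) T,
      HasDerivWithinAt (fun s => ψ i x s) (ψt i x t) (Set.Icc 0 T) t)
    (hψt_cont : ∀ i, ContinuousOn (fun p : ℝ × ℝ => ψt i p.1 p.2)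
      (Set.Ioo 0 1 ×ˢ Set.Ioc 0 T))
    -- the last component additionally has ∂ₓψₙ continuous on Ω̄ and ∂ₓ²ψₙ on Ω :
    (hψx : ∀ t ∈ Set.Icc (0:ℝ) T, ∀ x ∈ Set.Icc (0:ℝ) 1,
      HasDerivWithinAt (fun y => ψ (Fin.last n) y t) (ψx x t) (Set.Icc 0 1) x)
    (hψx_cont : ContinuousOn (fun p : ℝ × ℝ => ψx p.1 p.2)
      (Set.Icc 0 1 ×ˢ Set.Icc 0 T))
    (hψxx : ∀ t ∈ Set.Ioc (0:ℝ) T, ∀ x ∈ Set.Ioo (0:ℝ) 1,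
      HasDerivWithinAt (fun y => ψx y t) (ψxx x t) (Set.Ioo 0 1) x)
    (hψxx_cont : ContinuousOn (fun p : ℝ × ℝ => ψxx p.1 p.2)
      (Set.Ioo 0 1 ×ˢ Set.Ioc 0 T))
    -- arbitrary upper bounds for the four suprema :
    (b0 b1 bB bL : ℝ)
    (hb0 : ∀ t ∈ Set.Icc (0:ℝ) T,
      |ψ (Fin.last n) 0 t - Real.sqrt εn * ψx 0 t| ≤ b0)
    (hb1 : ∀ t ∈ Set.Icc (0:ℝ) T,
      |ψ (Fin.last n) 1 t + Real.sqrt εn * ψx 1 t| ≤ b1)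
    (hbB : ∀ i, ∀ x ∈ Set.Icc (0:ℝ) 1, |ψ i x 0| ≤ bB)
    (hbL1 : ∀ i, i ≠ Fin.last n → ∀ x ∈ Set.Ioo (0:ℝ) 1, ∀ t ∈ Set.Ioc (0:ℝ) T,
      |ψt i x t + ∑ j, a i j x t * ψ j x t| ≤ bL)
    (hbLn : ∀ x ∈ Set.Ioo (0:ℝ) 1, ∀ t ∈ Set.Ioc (0:ℝ) T,
      |ψt (Fin.last n) x t - εn * ψxx x t +
        ∑ j, a (Fin.last n) j x t * ψ j x t| ≤ bL) :
    ∀ i, ∀ x ∈ Set.Icc (0:ℝ) 1, ∀ t ∈ Set.Icc (0:ℝ) T,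
      |ψ i x t| ≤ max (max b0 b1) (max bB (bL / α)) := by
  have hbB0 : 0 ≤ bB := le_trans (abs_nonneg _) (hbB 0 0 (Set.left_mem_Icc.mpr zero_le_one))
  intro i x hx t ht
  have h1 := aux_oneSided n T hT εn hεn0 a ha_off α hα0 hα ψ ψt ψx ψxx hψ_cont hψt hψx hψxx
      b0 b1 bB bL hbB0
      (fun t ht => (abs_le.mp (hb0 t ht)).2)
      (fun t ht => (abs_le.mp (hb1 t ht)).2)
      (fun i x hx => (abs_le.mp (hbB i x hx)).2)
      (fun i hi x hx t ht => (abs_le.mp (hbL1 i hi x hx t ht)).2)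
      (fun x hx t ht => (abs_le.mp (hbLn x hx t ht)).2)
      i x hx t ht
  have h2 := aux_oneSided n T hT εn hεn0 a ha_off α hα0 hα
      (fun i x t => -(ψ i x t)) (fun i x t => -(ψt i x t))
      (fun x t => -(ψx x t)) (fun x t => -(ψxx x t))
      (fun i => (hψ_cont i).neg)
      (fun i x hx t ht => (hψt i x hx t ht).neg)
      (fun t ht x hx => (hψx t ht x hx).neg)
      (fun t ht x hx => (hψxx t ht x hx).neg)
      b0 b1 bB bL hbB0
      (fun t ht => by
        have h := (abs_le.mp (hb0 t ht)).1
        have he : Real.sqrt εn * -(ψx 0 t) = -(Real.sqrt εn * ψx 0 t) := by ring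
        beta_reduce
        rw [he]; linarith)
      (fun t ht => by
        have h := (abs_le.mp (hb1 t ht)).1
        have he : Real.sqrt εn * -(ψx 1 t) = -(Real.sqrt εn * ψx 1 t) := by ring
        beta_reduce
        rw [he]; linarith)
      (fun i x hx => by have h := (abs_le.mp (hbB i x hx)).1; beta_reduce; linarith)
      (fun i hi x hx t ht => by
        have h := (abs_le.mp (hbL1 i hi x hx t ht)).1
        have hs : ∑ j, a i j x t * -(ψ j x t) = -∑ j, a i j x t * ψ j x t := by
          rw [← Finset.sum_neg_distrib]
          exact Finset.sum_congr rfl (fun j _ => by ring)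
        beta_reduce
        rw [hs]; linarith)
      (fun x hx t ht => by
        have h := (abs_le.mp (hbLn x hx t ht)).1
        have hs : ∑ j, a (Fin.last n) j x t * -(ψ j x t)
            = -∑ j, a (Fin.last n) j x t * ψ j x t := by
          rw [← Finset.sum_neg_distrib]
          exact Finset.sum_congr rfl (fun j _ => by ring)
        have he : εn * -(ψxx x t) = -(εn * ψxx x t) := by ring
        beta_reduce
        rw [hs, he]; linarith)
      i x hx t ht
  rw [abs_le]
  exact ⟨by linarith, h1⟩
end

section
/- Pointwise layer bound for the singular component: Let w = (w₁,…,wₙ) be in the domain of L with Lw = 0 on Ω, w_i(x,0) = 0 for all i and all x ∈ [0,1], and suppose that for some K ≥ 0 one has |(β₀w)_i(0,t)| ≤ K and |(β₁w)_i(1,t)| ≤ K for all i and all t ∈ [0,T]. Then for all i = 1,…,n and all (x,t) ∈ Ω̄: |w_i(x,t)| ≤ K e^{αt} Bₙ(x), where Bₙ(x) = exp(−x√(α/εₙ)) + exp(−(1−x)√(α/εₙ)). -/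
/-- The layer function `B_r` associated with the parameter `e` (= `ε_r`):
`B_r(x) = exp(-x√(α/ε_r)) + exp(-(1-x)√(α/ε_r))`. -/
noncomputable def layerB (α e x : ℝ) : ℝ :=
  Real.exp (-x * Real.sqrt (α / e)) + Real.exp (-(1 - x) * Real.sqrt (α / e))

open Set Filter Topology

/-!
Compare `w` with the barrier `Ψ(x,t) = K e^{αt} B(x)`, `B(x) = e^{-xs} + e^{-(1-x)s}`,
`s = √(α/εₙ)`. As `B'' = s² B` and `εᵢ s² ≤ α`, `(LΨ)ᵢ ≥ (∑ⱼ aᵢⱼ) Ψ ≥ 0`; as `B(0) ≥ 1` and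
`B'(0) ≤ 0` (symmetrically at `x = 1`), the Robin data of `Ψ` are at least `K e^{αt} ≥ K`.
So `Φ = Ψ ∓ w` has nonnegative initial values, Robin data and `LΦ`, and the minimum principle
gives `Φ ≥ 0`: at a negative global minimum over all components, the initial and Robin
conditions exclude `t = 0` and `x ∈ {0, 1}`, while at an interior point `Φₜ ≤ 0`, `Φₓₓ ≥ 0`
and, the couplings being nonpositive, `∑ⱼ aᵢⱼ Φⱼ ≤ (∑ⱼ aᵢⱼ) Φᵢ < 0`, contradicting `LΦ ≥ 0`.
-/

theorem IsMinOn.hasDerivWithinAt_mul_sub_nonneg {f : ℝ → ℝ} {f' a y : ℝ} {s : Set ℝ}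
    (hs : Convex ℝ s) (ha : a ∈ s) (hy : y ∈ s) (hmin : IsMinOn f s a)
    (hf : HasDerivWithinAt f f' s a) : 0 ≤ f' * (y - a) := by
  have h := hmin.localize.hasFDerivWithinAt_nonneg hf.hasFDerivWithinAt
    (sub_mem_posTangentConeAt_of_segment_subset (hs.segment_subset ha hy))
  simpa [mul_comm] using h

theorem IsLocalMin.nonneg_of_hasDerivAt_hasDerivAt {f f' : ℝ → ℝ} {x f'' : ℝ}
    (hmin : IsLocalMin f x) (hf : ∀ᶠ y in 𝓝 x, HasDerivAt f (f' y) y)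
    (hf' : HasDerivAt f' f'' x) : 0 ≤ f'' := by
  have hderiv : deriv f =ᶠ[𝓝 x] f' := hf.mono fun y hy => hy.deriv
  have hf'' : deriv (deriv f) x = f'' := (hf'.congr_of_eventuallyEq hderiv).deriv
  by_contra! hneg
  -- The second-derivative test makes `x` a local maximum too, so `f` is locally constant.
  have hmax : IsLocalMax f x :=
    isLocalMax_of_deriv_deriv_neg (hf''.trans_lt hneg) (hmin.deriv_eq_zero)
      hf.self_of_nhds.continuousAt
  have hconst : f =ᶠ[𝓝 x] fun _ => f x := by
    filter_upwards [hmin, hmax] with y hy₁ hy₂ using le_antisymm hy₂ hy₁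
  have : deriv (deriv f) x = 0 := by
    rw [hconst.deriv.deriv_eq]; simp
  linarith

theorem IsCompact.exists_forall_le_of_finite_family {ι X β : Type*} [Finite ι] [Nonempty ι]
    [TopologicalSpace X] [LinearOrder β] [TopologicalSpace β] [OrderTopology β]
    {D : Set X} (hD : IsCompact D) (hne : D.Nonempty) {Φ : ι → X → β}
    (hΦ : ∀ i, ContinuousOn (Φ i) D) : ∃ i₀, ∃ p₀ ∈ D, ∀ j, ∀ q ∈ D, Φ i₀ p₀ ≤ Φ j q := by
  have := Fintype.ofFinite ι
  have hι : (Finset.univ : Finset ι).Nonempty := Finset.univ_nonempty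
  obtain ⟨p₀, hp₀, hmin⟩ := hD.exists_isMinOn hne
    (ContinuousOn.finset_inf'_apply hι fun j _ => hΦ j)
  obtain ⟨i₀, -, hi₀⟩ := Finset.exists_mem_eq_inf' hι fun j => Φ j p₀
  refine ⟨i₀, p₀, hp₀, fun j q hq => ?_⟩
  rw [← hi₀]
  exact (hmin hq).trans (Finset.inf'_le _ (Finset.mem_univ j))

theorem sum_mul_le_sum_mul_of_nonpos_of_le {ι : Type*} [Fintype ι] {c v : ι → ℝ} {i₀ : ι}
    (hc : ∀ j, j ≠ i₀ → c j ≤ 0) (hv : ∀ j, v i₀ ≤ v j) :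
    ∑ j, c j * v j ≤ (∑ j, c j) * v i₀ := by
  rw [Finset.sum_mul]
  refine Finset.sum_le_sum fun j _ => ?_
  rcases eq_or_ne j i₀ with rfl | hj
  · exact le_rfl
  · exact mul_le_mul_of_nonpos_left (hv j) (hc j hj)

noncomputable def expLayer (s x : ℝ) : ℝ := Real.exp (-x * s) + Real.exp (-(1 - x) * s)

noncomputable def expLayerDeriv (s x : ℝ) : ℝ :=
  s * (Real.exp (-(1 - x) * s) - Real.exp (-x * s))

theorem expLayer_pos (s x : ℝ) : 0 < expLayer s x := by
  unfold expLayer; positivity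

theorem continuous_expLayer (s : ℝ) : Continuous (expLayer s) := by
  unfold expLayer; fun_prop

theorem hasDerivAt_exp_neg_mul (s x : ℝ) :
    HasDerivAt (fun y => Real.exp (-y * s)) (Real.exp (-x * s) * -s) x := by
  simpa using ((hasDerivAt_id x).neg.mul_const s).exp

theorem hasDerivAt_exp_neg_one_sub_mul (s x : ℝ) :
    HasDerivAt (fun y => Real.exp (-(1 - y) * s)) (Real.exp (-(1 - x) * s) * s) x := by
  simpa using (((hasDerivAt_id x).const_sub 1).neg.mul_const s).exp

theorem hasDerivAt_expLayer (s x : ℝ) : HasDerivAt (expLayer s) (expLayerDeriv s x) x :=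
  ((hasDerivAt_exp_neg_mul s x).add (hasDerivAt_exp_neg_one_sub_mul s x)).congr_deriv
    (by rw [expLayerDeriv]; ring)

theorem hasDerivAt_expLayerDeriv (s x : ℝ) :
    HasDerivAt (expLayerDeriv s) (s ^ 2 * expLayer s x) x :=
  (((hasDerivAt_exp_neg_one_sub_mul s x).sub (hasDerivAt_exp_neg_mul s x)).const_mul s).congr_deriv
    (by rw [expLayer]; ring)

theorem one_le_expLayer_sub_mul_expLayerDeriv_zero {s γ : ℝ} (hs : 0 ≤ s) (hγ : 0 ≤ γ) :
    1 ≤ expLayer s 0 - γ * expLayerDeriv s 0 := by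
  have h : Real.exp (-s) ≤ 1 := Real.exp_le_one_iff.2 (by linarith)
  have : 0 ≤ γ * (s * (1 - Real.exp (-s))) := by
    have := sub_nonneg.2 h; positivity
  simp only [expLayer, expLayerDeriv, neg_zero, zero_mul, Real.exp_zero, sub_zero, neg_mul, one_mul]
  nlinarith [Real.exp_pos (-s)]

theorem one_le_expLayer_add_mul_expLayerDeriv_one {s γ : ℝ} (hs : 0 ≤ s) (hγ : 0 ≤ γ) :
    1 ≤ expLayer s 1 + γ * expLayerDeriv s 1 := by
  have h : Real.exp (-s) ≤ 1 := Real.exp_le_one_iff.2 (by linarith)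
  have : 0 ≤ γ * (s * (1 - Real.exp (-s))) := by
    have := sub_nonneg.2 h; positivity
  simp only [expLayer, expLayerDeriv, sub_self, neg_zero, zero_mul, Real.exp_zero, neg_mul, one_mul]
  nlinarith [Real.exp_pos (-s)]

theorem mul_sq_sqrt_div_le {ε e α : ℝ} (hε : 0 ≤ ε) (hεe : ε ≤ e) (hα : 0 ≤ α) :
    ε * Real.sqrt (α / e) ^ 2 ≤ α := by
  have he := hε.trans hεe
  rw [Real.sq_sqrt (div_nonneg hα he), ← mul_div_assoc]
  exact div_le_of_le_mul₀ he hα (by nlinarith)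

theorem mul_le_of_abs_le_one_of_abs_le {σ b K : ℝ} (hσ : |σ| ≤ 1) (hb : |b| ≤ K) :
    σ * b ≤ K := calc
  σ * b ≤ |σ| * |b| := abs_mul σ b ▸ le_abs_self _
  _ ≤ 1 * K := mul_le_mul hσ hb (abs_nonneg _) zero_le_one
  _ = K := one_mul K

theorem parabolic_robin_minimum_principle {ι : Type*} [Fintype ι] {T : ℝ} {ε γ : ι → ℝ}
    (hε : ∀ i, 0 ≤ ε i) (hγ : ∀ i, 0 ≤ γ i) {a : ι → ι → ℝ → ℝ → ℝ}
    (ha_off : ∀ i j, i ≠ j → ∀ x ∈ Icc (0:ℝ) 1, ∀ t ∈ Icc (0:ℝ) T, a i j x t ≤ 0)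
    (ha_sum : ∀ i, ∀ x ∈ Icc (0:ℝ) 1, ∀ t ∈ Icc (0:ℝ) T, 0 < ∑ j, a i j x t)
    {Φ Φx Φt Φxx : ι → ℝ → ℝ → ℝ}
    (hΦ : ∀ i, ContinuousOn (fun p : ℝ × ℝ => Φ i p.1 p.2) (Icc 0 1 ×ˢ Icc 0 T))
    (hΦx : ∀ i, ∀ t ∈ Icc (0:ℝ) T, ∀ x ∈ Icc (0:ℝ) 1,
      HasDerivWithinAt (fun y => Φ i y t) (Φx i x t) (Icc 0 1) x)
    (hΦt : ∀ i, ∀ x ∈ Ioo (0:ℝ) 1, ∀ t ∈ Ioc (0:ℝ) T,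
      HasDerivWithinAt (fun s => Φ i x s) (Φt i x t) (Icc 0 T) t)
    (hΦxx : ∀ i, ∀ t ∈ Ioc (0:ℝ) T, ∀ x ∈ Ioo (0:ℝ) 1,
      HasDerivWithinAt (fun y => Φx i y t) (Φxx i x t) (Ioo 0 1) x)
    (hLΦ : ∀ i, ∀ x ∈ Ioo (0:ℝ) 1, ∀ t ∈ Ioc (0:ℝ) T,
      0 ≤ Φt i x t - ε i * Φxx i x t + ∑ j, a i j x t * Φ j x t)
    (hinit : ∀ i, ∀ x ∈ Icc (0:ℝ) 1, 0 ≤ Φ i x 0)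
    (hleft : ∀ i, ∀ t ∈ Icc (0:ℝ) T, 0 ≤ Φ i 0 t - γ i * Φx i 0 t)
    (hright : ∀ i, ∀ t ∈ Icc (0:ℝ) T, 0 ≤ Φ i 1 t + γ i * Φx i 1 t) :
    ∀ i, ∀ x ∈ Icc (0:ℝ) 1, ∀ t ∈ Icc (0:ℝ) T, 0 ≤ Φ i x t := by
  intro i x hx t ht
  have : Nonempty ι := ⟨i⟩
  obtain ⟨i₀, ⟨x₀, t₀⟩, ⟨hx₀, ht₀⟩, hmin⟩ :=
    (isCompact_Icc.prod isCompact_Icc).exists_forall_le_of_finite_family ⟨(x, t), hx, ht⟩ hΦ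
  refine le_trans ?_ (hmin i (x, t) ⟨hx, ht⟩)
  by_contra! hneg
  dsimp only at hmin hneg
  have hmin_x : IsMinOn (fun y => Φ i₀ y t₀) (Icc 0 1) x₀ :=
    fun y hy => hmin i₀ (y, t₀) ⟨hy, ht₀⟩
  rcases ht₀.1.eq_or_lt with rfl | ht₀_pos
  · linarith [hinit i₀ x₀ hx₀]
  rcases hx₀.1.eq_or_lt with rfl | hx₀_pos
  · have := hmin_x.hasDerivWithinAt_mul_sub_nonneg (convex_Icc 0 1) hx₀
      (right_mem_Icc.2 zero_le_one) (hΦx i₀ t₀ ht₀ 0 hx₀)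
    nlinarith [hleft i₀ t₀ ht₀, hγ i₀]
  rcases hx₀.2.eq_or_lt with rfl | hx₀_lt
  · have := hmin_x.hasDerivWithinAt_mul_sub_nonneg (convex_Icc 0 1) hx₀
      (left_mem_Icc.2 zero_le_one) (hΦx i₀ t₀ ht₀ 1 hx₀)
    nlinarith [hright i₀ t₀ ht₀, hγ i₀]
  have hx₀' : x₀ ∈ Ioo (0:ℝ) 1 := ⟨hx₀_pos, hx₀_lt⟩
  have ht₀' : t₀ ∈ Ioc (0:ℝ) T := ⟨ht₀_pos, ht₀.2⟩
  have hΦt_nonpos : Φt i₀ x₀ t₀ ≤ 0 := by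
    have hmin_t : IsMinOn (fun s => Φ i₀ x₀ s) (Icc 0 T) t₀ :=
      fun s hs => hmin i₀ (x₀, s) ⟨hx₀, hs⟩
    have := hmin_t.hasDerivWithinAt_mul_sub_nonneg (convex_Icc 0 T) ht₀
      (left_mem_Icc.2 (ht₀.1.trans ht₀.2)) (hΦt i₀ x₀ hx₀' t₀ ht₀')
    nlinarith
  have hΦxx_nonneg : 0 ≤ Φxx i₀ x₀ t₀ := by
    have hloc : IsLocalMin (fun y => Φ i₀ y t₀) x₀ :=
      hmin_x.localize.isLocalMin (Icc_mem_nhds hx₀_pos hx₀_lt)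
    refine hloc.nonneg_of_hasDerivAt_hasDerivAt ?_
      ((hΦxx i₀ t₀ ht₀' x₀ hx₀').hasDerivAt (Ioo_mem_nhds hx₀_pos hx₀_lt))
    filter_upwards [Ioo_mem_nhds hx₀_pos hx₀_lt] with y hy
    exact (hΦx i₀ t₀ ht₀ y (Ioo_subset_Icc_self hy)).hasDerivAt (Icc_mem_nhds hy.1 hy.2)
  have hcoupling : ∑ j, a i₀ j x₀ t₀ * Φ j x₀ t₀ ≤ (∑ j, a i₀ j x₀ t₀) * Φ i₀ x₀ t₀ :=
    sum_mul_le_sum_mul_of_nonpos_of_le (fun j hj => ha_off i₀ j hj.symm x₀ hx₀ t₀ ht₀)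
      fun j => hmin j (x₀, t₀) ⟨hx₀, ht₀⟩
  have := mul_neg_of_pos_of_neg (ha_sum i₀ x₀ hx₀ t₀ ht₀) hneg
  nlinarith [hLΦ i₀ x₀ hx₀' t₀ ht₀', mul_nonneg (hε i₀) hΦxx_nonneg]

theorem mul_le_exp_mul_layerB {ι : Type*} [Fintype ι] {T : ℝ} {ε : ι → ℝ} {e : ℝ}
    (hε : ∀ i, 0 ≤ ε i) (hεe : ∀ i, ε i ≤ e) {a : ι → ι → ℝ → ℝ → ℝ}
    (ha_off : ∀ i j, i ≠ j → ∀ x ∈ Icc (0:ℝ) 1, ∀ t ∈ Icc (0:ℝ) T, a i j x t ≤ 0)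
    {α : ℝ} (hα0 : 0 ≤ α)
    (hα : ∀ i, ∀ x ∈ Icc (0:ℝ) 1, ∀ t ∈ Icc (0:ℝ) T, α < ∑ j, a i j x t)
    {w wx wt wxx : ι → ℝ → ℝ → ℝ}
    (hw_cont : ∀ i, ContinuousOn (fun p : ℝ × ℝ => w i p.1 p.2) (Icc 0 1 ×ˢ Icc 0 T))
    (hwx : ∀ i, ∀ t ∈ Icc (0:ℝ) T, ∀ x ∈ Icc (0:ℝ) 1,
      HasDerivWithinAt (fun y => w i y t) (wx i x t) (Icc 0 1) x)
    (hwt : ∀ i, ∀ x ∈ Ioo (0:ℝ) 1, ∀ t ∈ Ioc (0:ℝ) T,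
      HasDerivWithinAt (fun s => w i x s) (wt i x t) (Icc 0 T) t)
    (hwxx : ∀ i, ∀ t ∈ Ioc (0:ℝ) T, ∀ x ∈ Ioo (0:ℝ) 1,
      HasDerivWithinAt (fun y => wx i y t) (wxx i x t) (Ioo 0 1) x)
    (hLw : ∀ i, ∀ x ∈ Ioo (0:ℝ) 1, ∀ t ∈ Ioc (0:ℝ) T,
      wt i x t - ε i * wxx i x t + ∑ j, a i j x t * w j x t = 0)
    (hinit : ∀ i, ∀ x ∈ Icc (0:ℝ) 1, w i x 0 = 0)
    {K : ℝ} (hK : 0 ≤ K)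
    (hb0 : ∀ i, ∀ t ∈ Icc (0:ℝ) T, |w i 0 t - Real.sqrt (ε i) * wx i 0 t| ≤ K)
    (hb1 : ∀ i, ∀ t ∈ Icc (0:ℝ) T, |w i 1 t + Real.sqrt (ε i) * wx i 1 t| ≤ K)
    {σ : ℝ} (hσ : |σ| ≤ 1) :
    ∀ i, ∀ x ∈ Icc (0:ℝ) 1, ∀ t ∈ Icc (0:ℝ) T,
      σ * w i x t ≤ K * Real.exp (α * t) * layerB α e x := by
  intro i x hx t ht
  set s := Real.sqrt (α / e)
  have hs : 0 ≤ s := Real.sqrt_nonneg _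
  have hKc : ∀ t ∈ Icc (0:ℝ) T, K ≤ K * Real.exp (α * t) := fun t ht =>
    le_mul_of_one_le_right hK (Real.one_le_exp (mul_nonneg hα0 ht.1))
  have hexp : ∀ t, HasDerivAt (fun t => K * Real.exp (α * t)) (α * (K * Real.exp (α * t))) t :=
    fun t => (((hasDerivAt_id t).const_mul α).exp.const_mul K).congr_deriv
      (by simp only [id, mul_one]; ring)
  suffices h : 0 ≤ K * Real.exp (α * t) * expLayer s x - σ * w i x t by
    change σ * w i x t ≤ K * Real.exp (α * t) * expLayer s x; linarith
  refine parabolic_robin_minimum_principle (γ := fun i => Real.sqrt (ε i)) hε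
    (fun i => Real.sqrt_nonneg _) ha_off (fun i x hx t ht => hα0.trans_lt (hα i x hx t ht))
    (Φ := fun i x t => K * Real.exp (α * t) * expLayer s x - σ * w i x t)
    (Φx := fun i x t => K * Real.exp (α * t) * expLayerDeriv s x - σ * wx i x t)
    (Φt := fun i x t => α * (K * Real.exp (α * t)) * expLayer s x - σ * wt i x t)
    (Φxx := fun i x t => K * Real.exp (α * t) * (s ^ 2 * expLayer s x) - σ * wxx i x t)
    (fun i => ?_) (fun i t ht x hx => ?_) (fun i x hx t ht => ?_) (fun i t ht x hx => ?_)
    (fun i x hx t ht => ?_) (fun i x hx => ?_) (fun i t ht => ?_) (fun i t ht => ?_) i x hx t ht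
  · exact ((Continuous.continuousOn (by fun_prop)).mul ((continuous_expLayer s).comp
      continuous_fst).continuousOn).sub (continuousOn_const.mul (hw_cont i))
  · exact ((hasDerivAt_expLayer s x).const_mul _).hasDerivWithinAt.sub
      ((hwx i t ht x hx).const_mul σ)
  · exact ((hexp t).mul_const _).hasDerivWithinAt.sub ((hwt i x hx t ht).const_mul σ)
  · exact ((hasDerivAt_expLayerDeriv s x).const_mul _).hasDerivWithinAt.sub
      ((hwxx i t ht x hx).const_mul σ)
  · have hsum : ∑ j, a i j x t * (K * Real.exp (α * t) * expLayer s x - σ * w j x t)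
        = (∑ j, a i j x t) * (K * Real.exp (α * t) * expLayer s x)
          - σ * ∑ j, a i j x t * w j x t := by
      rw [Finset.sum_mul, Finset.mul_sum, ← Finset.sum_sub_distrib]
      exact Finset.sum_congr rfl fun j _ => by ring
    have hΨ : 0 ≤ K * Real.exp (α * t) * expLayer s x := by
      have := expLayer_pos s x; positivity
    have hA := hα i x (Ioo_subset_Icc_self hx) t (Ioc_subset_Icc_self ht)
    have hL := hLw i x hx t ht
    rw [hsum]
    have hεs := mul_sq_sqrt_div_le (hε i) (hεe i) hα0
    linear_combination mul_nonneg hΨ (sub_nonneg.2 hεs) + mul_nonneg (hα0.trans hA.le) hΨ + σ * hL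
  · simp only [hinit i x hx, mul_zero, Real.exp_zero, mul_one, sub_zero]
    exact mul_nonneg hK (expLayer_pos s x).le
  · nlinarith [one_le_expLayer_sub_mul_expLayerDeriv_zero hs (Real.sqrt_nonneg (ε i)), hKc t ht,
      mul_le_of_abs_le_one_of_abs_le hσ (hb0 i t ht)]
  · nlinarith [one_le_expLayer_add_mul_expLayerDeriv_one hs (Real.sqrt_nonneg (ε i)), hKc t ht,
      mul_le_of_abs_le_one_of_abs_le hσ (hb1 i t ht)]

theorem stmt_8_general
    (n : ℕ) (T : ℝ)
    (ε : Fin (n + 1) → ℝ)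
    (hε0 : ∀ i, 0 < ε i) (hεm : StrictMono ε)
    (a : Fin (n + 1) → Fin (n + 1) → ℝ → ℝ → ℝ)
    (ha_off : ∀ i j, i ≠ j → ∀ x ∈ Set.Icc (0:ℝ) 1, ∀ t ∈ Set.Icc (0:ℝ) T,
      a i j x t ≤ 0)
    (α : ℝ) (hα0 : 0 < α)
    (hα : ∀ i, ∀ x ∈ Set.Icc (0:ℝ) 1, ∀ t ∈ Set.Icc (0:ℝ) T, α < ∑ j, a i j x t)
    (w wx wt wxx : Fin (n + 1) → ℝ → ℝ → ℝ)
    -- w is in the domain of L :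
    (hw_cont : ∀ i, ContinuousOn (fun p : ℝ × ℝ => w i p.1 p.2)
      (Set.Icc 0 1 ×ˢ Set.Icc 0 T))
    (hwx : ∀ i, ∀ t ∈ Set.Icc (0:ℝ) T, ∀ x ∈ Set.Icc (0:ℝ) 1,
      HasDerivWithinAt (fun y => w i y t) (wx i x t) (Set.Icc 0 1) x)
    (hwt : ∀ i, ∀ x ∈ Set.Ioo (0:ℝ) 1, ∀ t ∈ Set.Ioc (0:ℝ) T,
      HasDerivWithinAt (fun s => w i x s) (wt i x t) (Set.Icc 0 T) t)
    (hwxx : ∀ i, ∀ t ∈ Set.Ioc (0:ℝ) T, ∀ x ∈ Set.Ioo (0:ℝ) 1,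
      HasDerivWithinAt (fun y => wx i y t) (wxx i x t) (Set.Ioo 0 1) x)
    -- L w = 0 on Ω and w(x,0) = 0 :
    (hLw : ∀ i, ∀ x ∈ Set.Ioo (0:ℝ) 1, ∀ t ∈ Set.Ioc (0:ℝ) T,
      wt i x t - ε i * wxx i x t + ∑ j, a i j x t * w j x t = 0)
    (hinit : ∀ i, ∀ x ∈ Set.Icc (0:ℝ) 1, w i x 0 = 0)
    -- the Robin boundary values are bounded by K :
    (K : ℝ) (hK : 0 ≤ K)
    (hb0 : ∀ i, ∀ t ∈ Set.Icc (0:ℝ) T,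
      |w i 0 t - Real.sqrt (ε i) * wx i 0 t| ≤ K)
    (hb1 : ∀ i, ∀ t ∈ Set.Icc (0:ℝ) T,
      |w i 1 t + Real.sqrt (ε i) * wx i 1 t| ≤ K) :
    ∀ i, ∀ x ∈ Set.Icc (0:ℝ) 1, ∀ t ∈ Set.Icc (0:ℝ) T,
      |w i x t| ≤ K * Real.exp (α * t) * layerB α (ε (Fin.last n)) x := by
  intro i x hx t ht
  have bound := fun (σ : ℝ) (hσ : |σ| ≤ 1) =>
    mul_le_exp_mul_layerB (fun j => (hε0 j).le) (fun j => hεm.monotone (Fin.le_last j)) ha_off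
      hα0.le hα hw_cont hwx hwt hwxx hLw hinit hK hb0 hb1 hσ i x hx t ht
  rw [abs_le]
  constructor
  · linarith [bound (-1) (by norm_num)]
  · simpa using bound 1 (by norm_num)

theorem stmt_8
    (n : ℕ) (T : ℝ) (hT : 0 < T)
    (ε : Fin (n + 1) → ℝ)
    (hε0 : ∀ i, 0 < ε i) (hε1 : ∀ i, ε i < 1) (hεm : StrictMono ε)
    (a : Fin (n + 1) → Fin (n + 1) → ℝ → ℝ → ℝ)
    (ha_cont : ∀ i j, ContinuousOn (fun p : ℝ × ℝ => a i j p.1 p.2)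
      (Set.Icc 0 1 ×ˢ Set.Icc 0 T))
    (ha_diag : ∀ i, ∀ x ∈ Set.Icc (0:ℝ) 1, ∀ t ∈ Set.Icc (0:ℝ) T,
      ∑ j ∈ Finset.univ.erase i, |a i j x t| < a i i x t)
    (ha_off : ∀ i j, i ≠ j → ∀ x ∈ Set.Icc (0:ℝ) 1, ∀ t ∈ Set.Icc (0:ℝ) T,
      a i j x t ≤ 0)
    (α : ℝ) (hα0 : 0 < α)
    (hα : ∀ i, ∀ x ∈ Set.Icc (0:ℝ) 1, ∀ t ∈ Set.Icc (0:ℝ) T, α < ∑ j, a i j x t)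
    (w wx wt wxx : Fin (n + 1) → ℝ → ℝ → ℝ)
    -- w is in the domain of L :
    (hw_cont : ∀ i, ContinuousOn (fun p : ℝ × ℝ => w i p.1 p.2)
      (Set.Icc 0 1 ×ˢ Set.Icc 0 T))
    (hwx_cont : ∀ i, ContinuousOn (fun p : ℝ × ℝ => wx i p.1 p.2)
      (Set.Icc 0 1 ×ˢ Set.Icc 0 T))
    (hwx : ∀ i, ∀ t ∈ Set.Icc (0:ℝ) T, ∀ x ∈ Set.Icc (0:ℝ) 1,
      HasDerivWithinAt (fun y => w i y t) (wx i x t) (Set.Icc 0 1) x)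
    (hwt : ∀ i, ∀ x ∈ Set.Ioo (0:ℝ) 1, ∀ t ∈ Set.Ioc (0:ℝ) T,
      HasDerivWithinAt (fun s => w i x s) (wt i x t) (Set.Icc 0 T) t)
    (hwxx : ∀ i, ∀ t ∈ Set.Ioc (0:ℝ) T, ∀ x ∈ Set.Ioo (0:ℝ) 1,
      HasDerivWithinAt (fun y => wx i y t) (wxx i x t) (Set.Ioo 0 1) x)
    (hwt_cont : ∀ i, ContinuousOn (fun p : ℝ × ℝ => wt i p.1 p.2)
      (Set.Ioo 0 1 ×ˢ Set.Ioc 0 T))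
    (hwxx_cont : ∀ i, ContinuousOn (fun p : ℝ × ℝ => wxx i p.1 p.2)
      (Set.Ioo 0 1 ×ˢ Set.Ioc 0 T))
    -- L w = 0 on Ω and w(x,0) = 0 :
    (hLw : ∀ i, ∀ x ∈ Set.Ioo (0:ℝ) 1, ∀ t ∈ Set.Ioc (0:ℝ) T,
      wt i x t - ε i * wxx i x t + ∑ j, a i j x t * w j x t = 0)
    (hinit : ∀ i, ∀ x ∈ Set.Icc (0:ℝ) 1, w i x 0 = 0)
    -- the Robin boundary values are bounded by K :
    (K : ℝ) (hK : 0 ≤ K)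
    (hb0 : ∀ i, ∀ t ∈ Set.Icc (0:ℝ) T,
      |w i 0 t - Real.sqrt (ε i) * wx i 0 t| ≤ K)
    (hb1 : ∀ i, ∀ t ∈ Set.Icc (0:ℝ) T,
      |w i 1 t + Real.sqrt (ε i) * wx i 1 t| ≤ K) :
    ∀ i, ∀ x ∈ Set.Icc (0:ℝ) 1, ∀ t ∈ Set.Icc (0:ℝ) T,
      |w i x t| ≤ K * Real.exp (α * t) * layerB α (ε (Fin.last n)) x :=
  stmt_8_general n T ε hε0 hεm a ha_off α hα0 hα w wx wt wxx hw_cont hwx hwt hwxx hLw hinit K hK hb0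
    hb1
end

section
/- Existence, uniqueness and comparison at the crossing points of layer functions: Let α > 0, 0 < ε_i < ε_j and 0 < s ≤ 3/2. Then there exists a unique point x⁽ˢ⁾_{i,j} > 0 such that B_i^L(x⁽ˢ⁾_{i,j})/ε_i^s = B_j^L(x⁽ˢ⁾_{i,j})/ε_j^s, namely x⁽ˢ⁾_{i,j} = s·ln(ε_j/ε_i) / ( √α (ε_i^{−1/2} − ε_j^{−1/2}) ). Moreover B_i^L(x)/ε_i^s > B_j^L(x)/ε_j^s for all x ∈ [0, x⁽ˢ⁾_{i,j}) and B_i^L(x)/ε_i^s < B_j^L(x)/ε_j^s for all x ∈ (x⁽ˢ⁾_{i,j}, 1]. -/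
/-- The left layer function `B^L(x) = exp(-x √(α/ε))`. -/
noncomputable def layerBL (α e x : ℝ) : ℝ := Real.exp (-x * Real.sqrt (α / e))

/-- The crossing point `x⁽ˢ⁾_{i,j} = s ln(ε_j/ε_i) / (√α (ε_i^{-1/2} - ε_j^{-1/2}))`. -/
noncomputable def crossPt (α s εi εj : ℝ) : ℝ :=
  s * Real.log (εj / εi) /
    (Real.sqrt α * (εi ^ (-(1:ℝ)/2) - εj ^ (-(1:ℝ)/2)))

/- STATEMENT 10: Existence, uniqueness and comparison at the crossing points
of the layer functions. -/
theorem stmt_10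
    (α s εi εj : ℝ) (hα : 0 < α) (hs0 : 0 < s) (hs : s ≤ 3 / 2)
    (hi : 0 < εi) (hij : εi < εj) :
    (∃! x : ℝ, 0 < x ∧
        layerBL α εi x / εi ^ s = layerBL α εj x / εj ^ s) ∧
    (0 < crossPt α s εi εj ∧
      layerBL α εi (crossPt α s εi εj) / εi ^ s =
        layerBL α εj (crossPt α s εi εj) / εj ^ s) ∧
    (∀ x ∈ Set.Ico (0:ℝ) (crossPt α s εi εj),
      layerBL α εj x / εj ^ s < layerBL α εi x / εi ^ s) ∧
    (∀ x ∈ Set.Ioc (crossPt α s εi εj) (1:ℝ),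
      layerBL α εi x / εi ^ s < layerBL α εj x / εj ^ s) := by
  have hj : 0 < εj := hi.trans hij
  have hd : Real.sqrt (α/εj) < Real.sqrt (α/εi) :=
    Real.sqrt_lt_sqrt (by positivity) (div_lt_div_of_pos_left hα hi hij)
  set ai := Real.sqrt (α/εi) with hai
  set aj := Real.sqrt (α/εj) with haj
  have hDpos : 0 < ai - aj := sub_pos.mpr hd
  have hc : 0 < s * Real.log (εj/εi) :=
    mul_pos hs0 (Real.log_pos ((one_lt_div hi).mpr hij))
  have hcross : crossPt α s εi εj = s * Real.log (εj/εi) / (ai - aj) := by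
    unfold crossPt
    congr 1
    have h1 : εi ^ (-(1:ℝ)/2) = (Real.sqrt εi)⁻¹ := by
      rw [show (-(1:ℝ)/2) = -(1/2) by norm_num, Real.rpow_neg hi.le,
        ← Real.sqrt_eq_rpow]
    have h2 : εj ^ (-(1:ℝ)/2) = (Real.sqrt εj)⁻¹ := by
      rw [show (-(1:ℝ)/2) = -(1/2) by norm_num, Real.rpow_neg hj.le,
        ← Real.sqrt_eq_rpow]
    rw [h1, h2, hai, haj, Real.sqrt_div hα.le, Real.sqrt_div hα.le]
    have hsi : Real.sqrt εi ≠ 0 := (Real.sqrt_pos.mpr hi).ne'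
    have hsj : Real.sqrt εj ≠ 0 := (Real.sqrt_pos.mpr hj).ne'
    field_simp
  have hx0 : 0 < crossPt α s εi εj := by rw [hcross]; exact div_pos hc hDpos
  have key : ∀ e : ℝ, 0 < e → ∀ x : ℝ,
      layerBL α e x / e ^ s = Real.exp (-x * Real.sqrt (α/e) - s * Real.log e) := by
    intro e he x
    rw [layerBL, Real.rpow_def_of_pos he, ← Real.exp_sub]
    congr 1
    ring
  have hlog : Real.log (εj/εi) = Real.log εj - Real.log εi :=
    Real.log_div hj.ne' hi.ne'
  have heq : ∀ x : ℝ,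
      (layerBL α εi x / εi ^ s = layerBL α εj x / εj ^ s) ↔ x = crossPt α s εi εj := by
    intro x
    rw [key εi hi, key εj hj, Real.exp_eq_exp, hcross, eq_div_iff hDpos.ne', hlog]
    constructor <;> intro h <;> nlinarith [h]
  have hlt : ∀ x : ℝ, x < crossPt α s εi εj →
      layerBL α εj x / εj ^ s < layerBL α εi x / εi ^ s := by
    intro x hx
    rw [key εi hi, key εj hj, Real.exp_lt_exp]
    rw [hcross, lt_div_iff₀ hDpos] at hx
    nlinarith [hx]
  have hgt : ∀ x : ℝ, crossPt α s εi εj < x →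
      layerBL α εi x / εi ^ s < layerBL α εj x / εj ^ s := by
    intro x hx
    rw [key εi hi, key εj hj, Real.exp_lt_exp]
    rw [hcross, div_lt_iff₀ hDpos] at hx
    nlinarith [hx]
  refine ⟨⟨crossPt α s εi εj, ⟨hx0, (heq _).mpr rfl⟩, ?_⟩,
    ⟨hx0, (heq _).mpr rfl⟩, ?_, ?_⟩
  · rintro y ⟨_, hy⟩; exact (heq y).mp hy
  · intro x hx; exact hlt x hx.2
  · intro x hx; exact hgt x hx.1
end

section
/- Ordering of the crossing points: Let α > 0 and 0 < s ≤ 3/2, and for 0 < ε_i < ε_j let x⁽ˢ⁾_{i,j} = s·ln(ε_j/ε_i) / ( √α (ε_i^{−1/2} − ε_j^{−1/2}) ) be the unique positive point where B_i^L(x)/ε_i^s = B_j^L(x)/ε_j^s. Then: (i) if 0 < ε_i < ε_{i'} < ε_j, then x⁽ˢ⁾_{i,j} < x⁽ˢ⁾_{i',j}; and (ii) if 0 < ε_i < ε_j < ε_{j'}, then x⁽ˢ⁾_{i,j} < x⁽ˢ⁾_{i,j'}. -/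
lemma crossPt_eq (α s a b : ℝ) (hα : 0 < α) (ha : 0 < a) (hab : a < b) :
    crossPt α s a b =
      (2 * s / Real.sqrt α) *
        ((Real.log (a ^ (-(1:ℝ)/2)) - Real.log (b ^ (-(1:ℝ)/2))) /
          (a ^ (-(1:ℝ)/2) - b ^ (-(1:ℝ)/2))) := by
  have hb : 0 < b := ha.trans hab
  have hu : b ^ (-(1:ℝ)/2) < a ^ (-(1:ℝ)/2) := by
    apply Real.rpow_lt_rpow_of_neg ha hab; norm_num
  have hne : a ^ (-(1:ℝ)/2) - b ^ (-(1:ℝ)/2) ≠ 0 := by linarith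
  have hs : Real.sqrt α ≠ 0 := ne_of_gt (Real.sqrt_pos.2 hα)
  rw [crossPt, Real.log_div (ne_of_gt hb) (ne_of_gt ha),
    Real.log_rpow ha, Real.log_rpow hb]
  field_simp
  ring

lemma log_slope_lt {v u u' : ℝ} (hv : 0 < v) (hvu' : v < u') (hu'u : u' < u) :
    (Real.log u - Real.log v) / (u - v) < (Real.log u' - Real.log v) / (u' - v) :=
  strictConcaveOn_log_Ioi.secant_strict_mono (Set.mem_Ioi.2 hv)
    (Set.mem_Ioi.2 (hv.trans hvu')) (Set.mem_Ioi.2 (hv.trans (hvu'.trans hu'u)))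
    (ne_of_gt hvu') (ne_of_gt (hvu'.trans hu'u)) hu'u

/- STATEMENT 11: Ordering of the crossing points. -/
theorem stmt_11
    (α s : ℝ) (hα : 0 < α) (hs0 : 0 < s) (hs : s ≤ 3 / 2) :
    (∀ εi εi' εj : ℝ, 0 < εi → εi < εi' → εi' < εj →
      crossPt α s εi εj < crossPt α s εi' εj) ∧
    (∀ εi εj εj' : ℝ, 0 < εi → εi < εj → εj < εj' →
      crossPt α s εi εj < crossPt α s εi εj') := by
  have hc : 0 < 2 * s / Real.sqrt α :=
    div_pos (by linarith) (Real.sqrt_pos.2 hα)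
  constructor
  · intro a a' b ha haa' hab
    have ha' : 0 < a' := ha.trans haa'
    rw [crossPt_eq α s a b hα ha (haa'.trans hab),
      crossPt_eq α s a' b hα ha' hab]
    apply mul_lt_mul_of_pos_left _ hc
    have h1 : b ^ (-(1:ℝ)/2) < a' ^ (-(1:ℝ)/2) :=
      Real.rpow_lt_rpow_of_neg ha' hab (by norm_num)
    have h2 : a' ^ (-(1:ℝ)/2) < a ^ (-(1:ℝ)/2) :=
      Real.rpow_lt_rpow_of_neg ha haa' (by norm_num)
    exact log_slope_lt (Real.rpow_pos_of_pos (ha.trans (haa'.trans hab)) _) h1 h2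
  · intro a b b' ha hab hbb'
    rw [crossPt_eq α s a b hα ha hab,
      crossPt_eq α s a b' hα ha (hab.trans hbb')]
    apply mul_lt_mul_of_pos_left _ hc
    have h1 : b' ^ (-(1:ℝ)/2) < b ^ (-(1:ℝ)/2) :=
      Real.rpow_lt_rpow_of_neg (ha.trans hab) hbb' (by norm_num)
    have h2 : b ^ (-(1:ℝ)/2) < a ^ (-(1:ℝ)/2) :=
      Real.rpow_lt_rpow_of_neg ha hab (by norm_num)
    have key := strictConcaveOn_log_Ioi.secant_strict_mono
      (a := a ^ (-(1:ℝ)/2)) (x := b' ^ (-(1:ℝ)/2)) (y := b ^ (-(1:ℝ)/2))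
      (Set.mem_Ioi.2 (Real.rpow_pos_of_pos ha _))
      (Set.mem_Ioi.2 (Real.rpow_pos_of_pos (ha.trans (hab.trans hbb')) _))
      (Set.mem_Ioi.2 (Real.rpow_pos_of_pos (ha.trans hab) _))
      (ne_of_lt (h1.trans h2)) (ne_of_lt h2) h1
    have e1 : ∀ x y : ℝ, x ≠ y →
        (Real.log y - Real.log x) / (y - x) = (Real.log x - Real.log y) / (x - y) := by
      intro x y h
      rw [← neg_div_neg_eq]; ring_nf
    rw [e1 _ _ (ne_of_lt h2), e1 _ _ (ne_of_lt (h1.trans h2))]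
    exact key
end

section
/- Bounds on the crossing points: Let α > 0, 0 < s ≤ 3/2 and 0 < ε_i < ε_j, and let x⁽ˢ⁾_{i,j} = s·ln(ε_j/ε_i) / ( √α (ε_i^{−1/2} − ε_j^{−1/2}) ) be the unique positive point where B_i^L(x)/ε_i^s = B_j^L(x)/ε_j^s. Then x⁽ˢ⁾_{i,j} < 2s√ε_j/√α. If in addition √ε_j ≤ √α/6, then x⁽ˢ⁾_{i,j} ∈ (0, 1/2). -/
/- STATEMENT 12: Bounds on the crossing points. -/
theorem stmt_12
    (α s εi εj : ℝ) (hα : 0 < α) (hs0 : 0 < s) (hs : s ≤ 3 / 2)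
    (hi : 0 < εi) (hij : εi < εj) :
    crossPt α s εi εj < 2 * s * Real.sqrt εj / Real.sqrt α ∧
    (Real.sqrt εj ≤ Real.sqrt α / 6 →
      crossPt α s εi εj ∈ Set.Ioo (0:ℝ) (1/2)) := by
  have hj : 0 < εj := hi.trans hij
  have ha : 0 < Real.sqrt εi := Real.sqrt_pos.2 hi
  have hb : 0 < Real.sqrt εj := Real.sqrt_pos.2 hj
  have hab : Real.sqrt εi < Real.sqrt εj := Real.sqrt_lt_sqrt hi.le hij
  have hsa : 0 < Real.sqrt α := Real.sqrt_pos.2 hα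
  have hri : εi ^ (-(1:ℝ)/2) = (Real.sqrt εi)⁻¹ := by
    rw [Real.sqrt_eq_rpow, ← Real.rpow_neg hi.le]; norm_num
  have hrj : εj ^ (-(1:ℝ)/2) = (Real.sqrt εj)⁻¹ := by
    rw [Real.sqrt_eq_rpow, ← Real.rpow_neg hj.le]; norm_num
  have hinv : (Real.sqrt εj)⁻¹ < (Real.sqrt εi)⁻¹ := by
    exact inv_strictAnti₀ ha hab
  have hD : 0 < Real.sqrt α * (εi ^ (-(1:ℝ)/2) - εj ^ (-(1:ℝ)/2)) := by
    rw [hri, hrj]; exact mul_pos hsa (sub_pos.2 hinv)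
  have hlog : Real.log (εj / εi) = 2 * Real.log (Real.sqrt εj / Real.sqrt εi) := by
    rw [Real.log_div hj.ne' hi.ne', Real.log_div hb.ne' ha.ne',
      Real.log_sqrt hj.le, Real.log_sqrt hi.le]; ring
  have hlt : Real.log (Real.sqrt εj / Real.sqrt εi) < Real.sqrt εj / Real.sqrt εi - 1 :=
    Real.log_lt_sub_one_of_pos (by positivity) (ne_of_gt ((one_lt_div ha).2 hab))
  have hlogpos : 0 < Real.log (εj / εi) :=
    Real.log_pos ((one_lt_div hi).2 hij)
  have hmain : crossPt α s εi εj < 2 * s * Real.sqrt εj / Real.sqrt α := by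
    rw [crossPt, div_lt_div_iff₀ hD hsa, hri, hrj, hlog]
    have key : Real.sqrt εj * ((Real.sqrt εi)⁻¹ - (Real.sqrt εj)⁻¹)
        = Real.sqrt εj / Real.sqrt εi - 1 := by
      field_simp
    have : 2 * s * Real.sqrt εj * (Real.sqrt α * ((Real.sqrt εi)⁻¹ - (Real.sqrt εj)⁻¹))
        = 2 * s * Real.sqrt α * (Real.sqrt εj / Real.sqrt εi - 1) := by
      rw [← key]; ring
    rw [this]
    have h2 : 0 < 2 * s * Real.sqrt α := by positivity
    calc s * (2 * Real.log (Real.sqrt εj / Real.sqrt εi)) * Real.sqrt α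
        = 2 * s * Real.sqrt α * Real.log (Real.sqrt εj / Real.sqrt εi) := by ring
      _ < 2 * s * Real.sqrt α * (Real.sqrt εj / Real.sqrt εi - 1) := by
          exact (mul_lt_mul_iff_right₀ h2).2 hlt
  refine ⟨hmain, fun h6 => ?_⟩
  constructor
  · exact div_pos (mul_pos hs0 hlogpos) hD
  · refine hmain.trans_le ?_
    rw [div_le_iff₀ hsa]
    nlinarith [hb.le, hsa.le]
end

section
/- Discrete maximum principle: Let Ψ = (Ψ₁,…,Ψₙ) be any vector-valued mesh function on the grid such that (β₀^{N,M}Ψ)_i(0,t_k) ≥ 0 and (β₁^{N,M}Ψ)_i(1,t_k) ≥ 0 for all i and all k = 1,…,M, Ψ_i(x_j,0) ≥ 0 for all i and j, and (L^{N,M}Ψ)_i(x_j,t_k) ≥ 0 for all i, all j = 1,…,N−1 and all k = 1,…,M. Then Ψ_i(x_j,t_k) ≥ 0 for all i, all j = 0,…,N and all k = 0,…,M. -/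
/- STATEMENT 14: Discrete maximum principle for the finite difference
operator `L^{N,M}` with the discrete Robin boundary operators.
Mesh points: `0 = x 0 < x 1 < … < x N = 1`, `t_k = k T/M`.
`a i m j k` is the matrix entry `a_{im}` at the grid point `(x_j, t_k)`;
`Ψ i j k` is the mesh function. -/
theorem stmt_14
    (n : ℕ) (T : ℝ) (hT : 0 < T)
    (N M : ℕ) (hN : 2 ≤ N) (hM : 1 ≤ M)
    (x : ℕ → ℝ) (hx0 : x 0 = 0) (hxN : x N = 1)
    (hxm : ∀ j < N, x j < x (j + 1))
    (ε : Fin (n + 1) → ℝ)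
    (hε0 : ∀ i, 0 < ε i) (hε1 : ∀ i, ε i < 1) (hεm : StrictMono ε)
    (a : Fin (n + 1) → Fin (n + 1) → ℕ → ℕ → ℝ)
    (ha_diag : ∀ i, ∀ j ≤ N, ∀ k ≤ M,
      ∑ m ∈ Finset.univ.erase i, |a i m j k| < a i i j k)
    (ha_off : ∀ i m, i ≠ m → ∀ j ≤ N, ∀ k ≤ M, a i m j k ≤ 0)
    (α : ℝ) (hα0 : 0 < α)
    (hα : ∀ i, ∀ j ≤ N, ∀ k ≤ M, α < ∑ m, a i m j k)
    (Ψ : Fin (n + 1) → ℕ → ℕ → ℝ)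
    -- discrete Robin boundary conditions :
    (hb0 : ∀ i, ∀ k, 1 ≤ k → k ≤ M →
      0 ≤ Ψ i 0 k - Real.sqrt (ε i) * ((Ψ i 1 k - Ψ i 0 k) / (x 1 - x 0)))
    (hb1 : ∀ i, ∀ k, 1 ≤ k → k ≤ M →
      0 ≤ Ψ i N k + Real.sqrt (ε i) * ((Ψ i N k - Ψ i (N - 1) k) / (x N - x (N - 1))))
    -- initial condition :
    (hinit : ∀ i, ∀ j ≤ N, 0 ≤ Ψ i j 0)
    -- interior sign condition on L^{N,M} Ψ :
    (hL : ∀ i, ∀ j, 1 ≤ j → j ≤ N - 1 → ∀ k, 1 ≤ k → k ≤ M →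
      0 ≤ (Ψ i j k - Ψ i j (k - 1)) / (T / (M : ℝ))
        - ε i * (2 / (x (j + 1) - x (j - 1)) *
            ((Ψ i (j + 1) k - Ψ i j k) / (x (j + 1) - x j)
              - (Ψ i j k - Ψ i (j - 1) k) / (x j - x (j - 1))))
        + ∑ m, a i m j k * Ψ m j k) :
    ∀ i, ∀ j ≤ N, ∀ k ≤ M, 0 ≤ Ψ i j k := by

  suffices h : ∀ k ≤ M, ∀ i : Fin (n+1), ∀ j ≤ N, 0 ≤ Ψ i j k by
    intro i j hj k hk; exact h k hk i j hj
  intro k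
  induction k with
  | zero => intro _ i j hj; exact hinit i j hj
  | succ k ih =>
    intro hk
    have ihk : ∀ i : Fin (n+1), ∀ j ≤ N, 0 ≤ Ψ i j k := ih (by omega)
    classical
    obtain ⟨p, hpmem, hpmin⟩ := Finset.exists_min_image
      ((Finset.univ : Finset (Fin (n+1))) ×ˢ Finset.range (N+1))
      (fun p => Ψ p.1 p.2 (k+1))
      ⟨(0, 0), by simp⟩
    obtain ⟨i0, j0⟩ := p
    have hj0 : j0 ≤ N := by
      have := (Finset.mem_product.mp hpmem).2
      simpa [Nat.lt_succ_iff] using this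
    have hmin : ∀ i : Fin (n+1), ∀ j ≤ N, Ψ i0 j0 (k+1) ≤ Ψ i j (k+1) := by
      intro i j hj
      exact hpmin (i, j) (by simp [Finset.mem_product, Nat.lt_succ_iff, hj])
    suffices hm0 : 0 ≤ Ψ i0 j0 (k+1) by
      intro i j hj; exact hm0.trans (hmin i j hj)
    by_contra hneg
    push_neg at hneg
    have hk1 : 1 ≤ k + 1 := by omega
    rcases Nat.eq_zero_or_pos j0 with hz | hpos
    · -- left boundary
      subst hz
      have hx01 : x 0 < x 1 := hxm 0 (by omega)
      have hΨ1 : Ψ i0 0 (k+1) ≤ Ψ i0 1 (k+1) := hmin i0 1 (by omega)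
      have hq : 0 ≤ (Ψ i0 1 (k+1) - Ψ i0 0 (k+1)) / (x 1 - x 0) :=
        div_nonneg (by linarith) (by linarith)
      have hs : 0 ≤ Real.sqrt (ε i0) * ((Ψ i0 1 (k+1) - Ψ i0 0 (k+1)) / (x 1 - x 0)) :=
        mul_nonneg (Real.sqrt_nonneg _) hq
      have hb := hb0 i0 (k+1) hk1 hk
      linarith
    rcases eq_or_lt_of_le hj0 with hNe | hlt
    · -- right boundary
      subst hNe
      have e : j0 - 1 + 1 = j0 := by omega
      have hxN1 : x (j0 - 1) < x j0 := by
        have := hxm (j0 - 1) (by omega)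
        rwa [e] at this
      have hΨ1 : Ψ i0 j0 (k+1) ≤ Ψ i0 (j0 - 1) (k+1) := hmin i0 (j0 - 1) (by omega)
      have hq : (Ψ i0 j0 (k+1) - Ψ i0 (j0 - 1) (k+1)) / (x j0 - x (j0 - 1)) ≤ 0 :=
        div_nonpos_of_nonpos_of_nonneg (by linarith) (by linarith)
      have hs : Real.sqrt (ε i0) * ((Ψ i0 j0 (k+1) - Ψ i0 (j0 - 1) (k+1)) / (x j0 - x (j0 - 1))) ≤ 0 :=
        mul_nonpos_of_nonneg_of_nonpos (Real.sqrt_nonneg _) hq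
      have hb := hb1 i0 (k+1) hk1 hk
      linarith
    · -- interior
      have hj1 : 1 ≤ j0 := hpos
      have hLI := hL i0 j0 hj1 (by omega) (k+1) hk1 hk
      simp only [Nat.add_sub_cancel] at hLI
      -- time term
      have hMpos : (0:ℝ) < (M:ℝ) := by exact_mod_cast (by omega : 0 < M)
      have hTM : 0 < T / (M:ℝ) := div_pos hT hMpos
      have hprev : 0 ≤ Ψ i0 j0 k := ihk i0 j0 hj0
      have htime : (Ψ i0 j0 (k+1) - Ψ i0 j0 k) / (T / (M:ℝ)) ≤ 0 :=
        div_nonpos_of_nonpos_of_nonneg (by linarith) hTM.le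
      -- spatial term
      have e : j0 - 1 + 1 = j0 := by omega
      have hx_lo : x (j0 - 1) < x j0 := by
        have := hxm (j0 - 1) (by omega)
        rwa [e] at this
      have hx_hi : x j0 < x (j0 + 1) := hxm j0 hlt
      have hΨp : Ψ i0 j0 (k+1) ≤ Ψ i0 (j0 + 1) (k+1) := hmin i0 (j0 + 1) (by omega)
      have hΨm : Ψ i0 j0 (k+1) ≤ Ψ i0 (j0 - 1) (k+1) := hmin i0 (j0 - 1) (by omega)
      have hq1 : 0 ≤ (Ψ i0 (j0 + 1) (k+1) - Ψ i0 j0 (k+1)) / (x (j0 + 1) - x j0) :=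
        div_nonneg (by linarith) (by linarith)
      have hq2 : (Ψ i0 j0 (k+1) - Ψ i0 (j0 - 1) (k+1)) / (x j0 - x (j0 - 1)) ≤ 0 :=
        div_nonpos_of_nonpos_of_nonneg (by linarith) (by linarith)
      have hB : 0 ≤ ε i0 * (2 / (x (j0 + 1) - x (j0 - 1)) *
            ((Ψ i0 (j0 + 1) (k+1) - Ψ i0 j0 (k+1)) / (x (j0 + 1) - x j0)
              - (Ψ i0 j0 (k+1) - Ψ i0 (j0 - 1) (k+1)) / (x j0 - x (j0 - 1)))) := by
        apply mul_nonneg (hε0 i0).le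
        apply mul_nonneg
        · apply div_nonneg (by norm_num)
          linarith
        · linarith
      -- reaction term
      have hReac : ∑ mm, a i0 mm j0 (k+1) * Ψ mm j0 (k+1)
          ≤ (∑ mm, a i0 mm j0 (k+1)) * Ψ i0 j0 (k+1) := by
        rw [Finset.sum_mul]
        apply Finset.sum_le_sum
        intro mm _
        rcases eq_or_ne mm i0 with h | h
        · subst h; exact le_refl _
        · exact mul_le_mul_of_nonpos_left (hmin mm j0 hj0)
            (ha_off i0 mm (Ne.symm h) j0 hj0 (k+1) hk)
      have hα' := hα i0 j0 hj0 (k+1) hk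
      have hR2 : (∑ mm, a i0 mm j0 (k+1)) * Ψ i0 j0 (k+1) < α * Ψ i0 j0 (k+1) :=
        mul_lt_mul_of_neg_right hα' hneg
      have hR3 : α * Ψ i0 j0 (k+1) < 0 := mul_neg_of_pos_of_neg hα0 hneg
      linarith
end

section
/- Discrete stability estimate: For any vector-valued mesh function Ψ = (Ψ₁,…,Ψₙ) on the grid and all i = 1,…,n, j = 0,…,N, k = 0,…,M: |Ψ_i(x_j,t_k)| ≤ max { max_{1≤k≤M} max_i |(β₀^{N,M}Ψ)_i(0,t_k)|, max_{1≤k≤M} max_i |(β₁^{N,M}Ψ)_i(1,t_k)|, max_{0≤j≤N} max_i |Ψ_i(x_j,0)|, (1/α)·max over 1≤j≤N−1, 1≤k≤M of max_i |(L^{N,M}Ψ)_i(x_j,t_k)| }. -/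
/- STATEMENT 15: Discrete stability estimate.  The (finite) maxima in the
estimate are rendered by quantifying over arbitrary upper bounds
`b0, b1, bB, bL`. -/

lemma aux15
    (n : ℕ) (T : ℝ) (hT : 0 < T)
    (N M : ℕ) (hN : 2 ≤ N) (hM : 1 ≤ M)
    (x : ℕ → ℝ)
    (hxm : ∀ j < N, x j < x (j + 1))
    (ε : Fin (n + 1) → ℝ)
    (hε0 : ∀ i, 0 < ε i)
    (a : Fin (n + 1) → Fin (n + 1) → ℕ → ℕ → ℝ)
    (ha_off : ∀ i m, i ≠ m → ∀ j ≤ N, ∀ k ≤ M, a i m j k ≤ 0)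
    (α : ℝ) (hα0 : 0 < α)
    (hα : ∀ i, ∀ j ≤ N, ∀ k ≤ M, α < ∑ m, a i m j k)
    (Ψ : Fin (n + 1) → ℕ → ℕ → ℝ)
    (b0 b1 bB bL : ℝ)
    (hb0 : ∀ i, ∀ k, 1 ≤ k → k ≤ M →
      Ψ i 0 k - Real.sqrt (ε i) * ((Ψ i 1 k - Ψ i 0 k) / (x 1 - x 0)) ≤ b0)
    (hb1 : ∀ i, ∀ k, 1 ≤ k → k ≤ M →
      Ψ i N k + Real.sqrt (ε i) *
        ((Ψ i N k - Ψ i (N - 1) k) / (x N - x (N - 1))) ≤ b1)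
    (hbB : ∀ i, ∀ j ≤ N, Ψ i j 0 ≤ bB)
    (hbB0 : 0 ≤ bB)
    (hbL : ∀ i, ∀ j, 1 ≤ j → j ≤ N - 1 → ∀ k, 1 ≤ k → k ≤ M →
      (Ψ i j k - Ψ i j (k - 1)) / (T / (M : ℝ))
        - ε i * (2 / (x (j + 1) - x (j - 1)) *
            ((Ψ i (j + 1) k - Ψ i j k) / (x (j + 1) - x j)
              - (Ψ i j k - Ψ i (j - 1) k) / (x j - x (j - 1))))
        + ∑ m, a i m j k * Ψ m j k ≤ bL) :
    ∀ i, ∀ j ≤ N, ∀ k ≤ M,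
      Ψ i j k ≤ max (max b0 b1) (max bB (bL / α)) := by
  set B := max (max b0 b1) (max bB (bL / α)) with hB
  have hbBB : bB ≤ B := le_trans (le_max_left _ _) (le_max_right _ _)
  have hb0B : b0 ≤ B := le_trans (le_max_left _ _) (le_max_left _ _)
  have hb1B : b1 ≤ B := le_trans (le_max_right _ _) (le_max_left _ _)
  have hbLB : bL / α ≤ B := le_trans (le_max_right _ _) (le_max_right _ _)
  obtain ⟨p, hp⟩ := Finite.exists_max
    (fun p : Fin (n+1) × Fin (N+1) × Fin (M+1) => Ψ p.1 p.2.1 p.2.2)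
  set i0 := p.1 with hi0
  set j0 := (p.2.1 : ℕ) with hj0d
  set k0 := (p.2.2 : ℕ) with hk0d
  set S := Ψ i0 j0 k0 with hS
  have hj0 : j0 ≤ N := Nat.lt_succ_iff.mp p.2.1.isLt
  have hk0 : k0 ≤ M := Nat.lt_succ_iff.mp p.2.2.isLt
  have hmax : ∀ m, ∀ j ≤ N, ∀ k ≤ M, Ψ m j k ≤ S := by
    intro m j hj k hk
    exact hp (m, ⟨j, by omega⟩, ⟨k, by omega⟩)
  have key : S ≤ B := by
    by_cases hSpos : S ≤ 0
    · exact hSpos.trans (hbB0.trans hbBB)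
    push_neg at hSpos
    rcases Nat.eq_zero_or_pos k0 with hk | hk
    · have h1 := hbB i0 j0 hj0
      rw [← hk] at h1
      exact h1.trans hbBB
    · rcases (by omega : j0 = 0 ∨ j0 = N ∨ (1 ≤ j0 ∧ j0 ≤ N - 1)) with hj | hj | hj
      · -- left boundary
        have hd : (0:ℝ) < x 1 - x 0 := sub_pos.mpr (hxm 0 (by omega))
        have hq : Ψ i0 1 k0 - Ψ i0 0 k0 ≤ 0 := by
          have := hmax i0 1 (by omega) k0 hk0
          rw [hj] at hS; linarith [hS.le]
        have hterm : Real.sqrt (ε i0) * ((Ψ i0 1 k0 - Ψ i0 0 k0) / (x 1 - x 0)) ≤ 0 :=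
          mul_nonpos_of_nonneg_of_nonpos (Real.sqrt_nonneg _) (div_nonpos_of_nonpos_of_nonneg hq hd.le)
        have := hb0 i0 k0 hk hk0
        rw [hj] at hS
        have : S ≤ b0 := by rw [hS]; linarith
        exact this.trans hb0B
      · -- right boundary
        have hd : (0:ℝ) < x N - x (N-1) := by
          have := hxm (N-1) (by omega)
          rw [show N - 1 + 1 = N by omega] at this
          linarith
        have hq : 0 ≤ Ψ i0 N k0 - Ψ i0 (N-1) k0 := by
          have := hmax i0 (N-1) (by omega) k0 hk0
          rw [hj] at hS; linarith [hS.le]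
        have hterm : 0 ≤ Real.sqrt (ε i0) * ((Ψ i0 N k0 - Ψ i0 (N-1) k0) / (x N - x (N-1))) :=
          mul_nonneg (Real.sqrt_nonneg _) (div_nonneg hq hd.le)
        have := hb1 i0 k0 hk hk0
        rw [hj] at hS
        have : S ≤ b1 := by rw [hS]; linarith
        exact this.trans hb1B
      · -- interior
        obtain ⟨hj1, hj2⟩ := hj
        have hjltN : j0 < N := by omega
        have hdm : (0:ℝ) < x j0 - x (j0 - 1) := by
          have := hxm (j0-1) (by omega)
          rw [show j0 - 1 + 1 = j0 by omega] at this
          linarith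
        have hdp : (0:ℝ) < x (j0+1) - x j0 := sub_pos.mpr (hxm j0 hjltN)
        have hdpm : (0:ℝ) < x (j0+1) - x (j0-1) := by linarith
        have hMpos : (0:ℝ) < (M:ℝ) := by exact_mod_cast Nat.lt_of_lt_of_le Nat.zero_lt_one hM
        have hTM : (0:ℝ) < T / (M:ℝ) := div_pos hT hMpos
        -- time difference nonneg
        have hDt : 0 ≤ (Ψ i0 j0 k0 - Ψ i0 j0 (k0 - 1)) / (T / (M:ℝ)) := by
          apply div_nonneg _ hTM.le
          have := hmax i0 j0 hj0 (k0-1) (by omega)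
          linarith
        -- second difference nonpos
        have hδ : (2 / (x (j0 + 1) - x (j0 - 1)) *
            ((Ψ i0 (j0 + 1) k0 - Ψ i0 j0 k0) / (x (j0 + 1) - x j0)
              - (Ψ i0 j0 k0 - Ψ i0 (j0 - 1) k0) / (x j0 - x (j0 - 1)))) ≤ 0 := by
          apply mul_nonpos_of_nonneg_of_nonpos (by positivity)
          have h1 := hmax i0 (j0+1) (by omega) k0 hk0
          have h2 := hmax i0 (j0-1) (by omega) k0 hk0
          have t1 : (Ψ i0 (j0 + 1) k0 - Ψ i0 j0 k0) / (x (j0 + 1) - x j0) ≤ 0 :=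
            div_nonpos_of_nonpos_of_nonneg (by linarith) hdp.le
          have t2 : 0 ≤ (Ψ i0 j0 k0 - Ψ i0 (j0 - 1) k0) / (x j0 - x (j0 - 1)) :=
            div_nonneg (by linarith) hdm.le
          linarith
        have hεδ : ε i0 * (2 / (x (j0 + 1) - x (j0 - 1)) *
            ((Ψ i0 (j0 + 1) k0 - Ψ i0 j0 k0) / (x (j0 + 1) - x j0)
              - (Ψ i0 j0 k0 - Ψ i0 (j0 - 1) k0) / (x j0 - x (j0 - 1)))) ≤ 0 :=
          mul_nonpos_of_nonneg_of_nonpos (hε0 i0).le hδ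
        -- sum bound
        have hsum : S * (∑ m, a i0 m j0 k0) ≤ ∑ m, a i0 m j0 k0 * Ψ m j0 k0 := by
          rw [Finset.mul_sum]
          apply Finset.sum_le_sum
          intro m _
          rcases eq_or_ne m i0 with h | h
          · subst h; rw [mul_comm]
          · rw [mul_comm S]
            exact mul_le_mul_of_nonpos_left (hmax m j0 hj0 k0 hk0)
              (ha_off i0 m (Ne.symm h) j0 hj0 k0 hk0)
        have hαS : α * S ≤ S * (∑ m, a i0 m j0 k0) := by
          rw [mul_comm α S]
          exact mul_le_mul_of_nonneg_left (hα i0 j0 hj0 k0 hk0).le hSpos.le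
        have hL := hbL i0 j0 hj1 hj2 k0 hk hk0
        have : α * S ≤ bL := by linarith
        have : S ≤ bL / α := (le_div_iff₀ hα0).mpr (by linarith)
        exact this.trans hbLB
  intro i j hj k hk
  exact (hmax i j hj k hk).trans key
theorem stmt_15
    (n : ℕ) (T : ℝ) (hT : 0 < T)
    (N M : ℕ) (hN : 2 ≤ N) (hM : 1 ≤ M)
    (x : ℕ → ℝ) (hx0 : x 0 = 0) (hxN : x N = 1)
    (hxm : ∀ j < N, x j < x (j + 1))
    (ε : Fin (n + 1) → ℝ)
    (hε0 : ∀ i, 0 < ε i) (hε1 : ∀ i, ε i < 1) (hεm : StrictMono ε)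
    (a : Fin (n + 1) → Fin (n + 1) → ℕ → ℕ → ℝ)
    (ha_diag : ∀ i, ∀ j ≤ N, ∀ k ≤ M,
      ∑ m ∈ Finset.univ.erase i, |a i m j k| < a i i j k)
    (ha_off : ∀ i m, i ≠ m → ∀ j ≤ N, ∀ k ≤ M, a i m j k ≤ 0)
    (α : ℝ) (hα0 : 0 < α)
    (hα : ∀ i, ∀ j ≤ N, ∀ k ≤ M, α < ∑ m, a i m j k)
    (Ψ : Fin (n + 1) → ℕ → ℕ → ℝ)
    -- arbitrary upper bounds for the four maxima :
    (b0 b1 bB bL : ℝ)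
    (hb0 : ∀ i, ∀ k, 1 ≤ k → k ≤ M →
      |Ψ i 0 k - Real.sqrt (ε i) * ((Ψ i 1 k - Ψ i 0 k) / (x 1 - x 0))| ≤ b0)
    (hb1 : ∀ i, ∀ k, 1 ≤ k → k ≤ M →
      |Ψ i N k + Real.sqrt (ε i) *
        ((Ψ i N k - Ψ i (N - 1) k) / (x N - x (N - 1)))| ≤ b1)
    (hbB : ∀ i, ∀ j ≤ N, |Ψ i j 0| ≤ bB)
    (hbL : ∀ i, ∀ j, 1 ≤ j → j ≤ N - 1 → ∀ k, 1 ≤ k → k ≤ M →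
      |(Ψ i j k - Ψ i j (k - 1)) / (T / (M : ℝ))
        - ε i * (2 / (x (j + 1) - x (j - 1)) *
            ((Ψ i (j + 1) k - Ψ i j k) / (x (j + 1) - x j)
              - (Ψ i j k - Ψ i (j - 1) k) / (x j - x (j - 1))))
        + ∑ m, a i m j k * Ψ m j k| ≤ bL) :
    ∀ i, ∀ j ≤ N, ∀ k ≤ M,
      |Ψ i j k| ≤ max (max b0 b1) (max bB (bL / α)) := by
  have hbB0 : 0 ≤ bB := le_trans (abs_nonneg _) (hbB 0 0 (by omega))
  have hup := aux15 n T hT N M hN hM x hxm ε hε0 a ha_off α hα0 hα Ψ b0 b1 bB bL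
    (fun i k h1 h2 => (le_abs_self _).trans (hb0 i k h1 h2))
    (fun i k h1 h2 => (le_abs_self _).trans (hb1 i k h1 h2))
    (fun i j hj => (le_abs_self _).trans (hbB i j hj)) hbB0
    (fun i j h1 h2 k h3 h4 => (le_abs_self _).trans (hbL i j h1 h2 k h3 h4))
  have hdown := aux15 n T hT N M hN hM x hxm ε hε0 a ha_off α hα0 hα
    (fun i j k => -Ψ i j k) b0 b1 bB bL
    (fun i k h1 h2 => by
      have : -Ψ i 0 k - Real.sqrt (ε i) * ((-Ψ i 1 k - -Ψ i 0 k) / (x 1 - x 0))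
          = -(Ψ i 0 k - Real.sqrt (ε i) * ((Ψ i 1 k - Ψ i 0 k) / (x 1 - x 0))) := by
        ring
      rw [this]
      exact (neg_le_abs _).trans (hb0 i k h1 h2))
    (fun i k h1 h2 => by
      have : -Ψ i N k + Real.sqrt (ε i) * ((-Ψ i N k - -Ψ i (N-1) k) / (x N - x (N-1)))
          = -(Ψ i N k + Real.sqrt (ε i) * ((Ψ i N k - Ψ i (N-1) k) / (x N - x (N-1)))) := by
        ring
      rw [this]
      exact (neg_le_abs _).trans (hb1 i k h1 h2))
    (fun i j hj => (neg_le_abs _).trans (hbB i j hj)) hbB0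
    (fun i j h1 h2 k h3 h4 => by
      have : (-Ψ i j k - -Ψ i j (k - 1)) / (T / (M : ℝ))
        - ε i * (2 / (x (j + 1) - x (j - 1)) *
            ((-Ψ i (j + 1) k - -Ψ i j k) / (x (j + 1) - x j)
              - (-Ψ i j k - -Ψ i (j - 1) k) / (x j - x (j - 1))))
        + ∑ m, a i m j k * (-Ψ m j k)
        = -((Ψ i j k - Ψ i j (k - 1)) / (T / (M : ℝ))
        - ε i * (2 / (x (j + 1) - x (j - 1)) *
            ((Ψ i (j + 1) k - Ψ i j k) / (x (j + 1) - x j)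
              - (Ψ i j k - Ψ i (j - 1) k) / (x j - x (j - 1))))
        + ∑ m, a i m j k * Ψ m j k) := by
        rw [show ∑ m, a i m j k * (-Ψ m j k) = -∑ m, a i m j k * Ψ m j k by
          simp [mul_neg]]
        ring
      rw [this]
      exact (neg_le_abs _).trans (hbL i j h1 h2 k h3 h4))
  intro i j hj k hk
  rw [abs_le]
  exact ⟨by have := hdown i j hj k hk; simpa using neg_le.mp (by simpa using this),
    hup i j hj k hk⟩
end

section
/- Discrete comparison principle: Let Φ and Z be vector-valued mesh functions on the grid such that, componentwise, |(β₀^{N,M}Z)_i(0,t_k)| ≤ (β₀^{N,M}Φ)_i(0,t_k) and |(β₁^{N,M}Z)_i(1,t_k)| ≤ (β₁^{N,M}Φ)_i(1,t_k) for all i and k = 1,…,M, |Z_i(x_j,0)| ≤ Φ_i(x_j,0) for all i and j, and |(L^{N,M}Z)_i(x_j,t_k)| ≤ (L^{N,M}Φ)_i(x_j,t_k) for all i, all j = 1,…,N−1 and k = 1,…,M. Then |Z_i(x_j,t_k)| ≤ Φ_i(x_j,t_k) for all i, all j = 0,…,N and all k = 0,…,M. -/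
/-- Discrete minimum principle: if the discrete operator values, boundary
operator values and initial values of `W` are all nonnegative, then `W` is
nonnegative on the whole grid. -/
lemma mesh_nonneg
    (n : ℕ) (T : ℝ) (hT : 0 < T)
    (N M : ℕ) (hN : 2 ≤ N) (hM : 1 ≤ M)
    (x : ℕ → ℝ)
    (hxm : ∀ j < N, x j < x (j + 1))
    (ε : Fin (n + 1) → ℝ) (hε0 : ∀ i, 0 ≤ ε i)
    (a : Fin (n + 1) → Fin (n + 1) → ℕ → ℕ → ℝ)
    (ha_off : ∀ i m, i ≠ m → ∀ j ≤ N, ∀ k ≤ M, a i m j k ≤ 0)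
    (α : ℝ) (hα0 : 0 < α)
    (hα : ∀ i, ∀ j ≤ N, ∀ k ≤ M, α < ∑ m, a i m j k)
    (W : Fin (n + 1) → ℕ → ℕ → ℝ)
    (hb0 : ∀ i, ∀ k, 1 ≤ k → k ≤ M →
      0 ≤ W i 0 k - Real.sqrt (ε i) * ((W i 1 k - W i 0 k) / (x 1 - x 0)))
    (hb1 : ∀ i, ∀ k, 1 ≤ k → k ≤ M →
      0 ≤ W i N k + Real.sqrt (ε i) *
        ((W i N k - W i (N - 1) k) / (x N - x (N - 1))))
    (hinit : ∀ i, ∀ j ≤ N, 0 ≤ W i j 0)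
    (hL : ∀ i, ∀ j, 1 ≤ j → j ≤ N - 1 → ∀ k, 1 ≤ k → k ≤ M →
      0 ≤ (W i j k - W i j (k - 1)) / (T / (M : ℝ))
        - ε i * (2 / (x (j + 1) - x (j - 1)) *
            ((W i (j + 1) k - W i j k) / (x (j + 1) - x j)
              - (W i j k - W i (j - 1) k) / (x j - x (j - 1))))
        + ∑ m, a i m j k * W m j k) :
    ∀ k ≤ M, ∀ i, ∀ j ≤ N, 0 ≤ W i j k := by
  intro k
  induction k with
  | zero => intro _ i j hj; exact hinit i j hj
  | succ k ih =>
    intro hkM i i' hj'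
    have hk : k ≤ M := Nat.le_of_succ_le hkM
    have ihk := ih hk
    obtain ⟨p, hpmem, hpmin⟩ := Finset.exists_min_image
      (Finset.univ ×ˢ Finset.range (N + 1)) (fun p => W p.1 p.2 (k + 1))
      ⟨(0, 0), by simp⟩
    obtain ⟨i₀, j₀⟩ := p
    have hmin : ∀ i j, j ≤ N → W i₀ j₀ (k + 1) ≤ W i j (k + 1) := by
      intro i j hj
      exact hpmin (i, j) (by simp [Finset.mem_product, Nat.lt_succ_iff, hj])
    have hj₀ : j₀ ≤ N := by
      have := (Finset.mem_product.mp hpmem).2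
      simpa [Nat.lt_succ_iff] using this
    have hμ0 : 0 ≤ W i₀ j₀ (k + 1) := by
      by_contra h
      push_neg at h
      rcases eq_or_ne j₀ 0 with h0 | h0
      · subst h0
        have hx01 : 0 < x 1 - x 0 := sub_pos.mpr (hxm 0 (by omega))
        have hq : 0 ≤ (W i₀ 1 (k + 1) - W i₀ 0 (k + 1)) / (x 1 - x 0) :=
          div_nonneg (by linarith [hmin i₀ 1 (by omega)]) hx01.le
        have hb := hb0 i₀ (k + 1) (by omega) hkM
        have := mul_nonneg (Real.sqrt_nonneg (ε i₀)) hq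
        linarith
      rcases eq_or_ne j₀ N with hNe | hNe
      · rw [hNe] at h hmin
        have hxx : x (N - 1) < x N := by
          have h1 : N - 1 < N := by omega
          have := hxm (N - 1) h1
          have h2 : N - 1 + 1 = N := by omega
          rwa [h2] at this
        have hq : (W i₀ N (k + 1) - W i₀ (N - 1) (k + 1)) / (x N - x (N - 1)) ≤ 0 :=
          div_nonpos_of_nonpos_of_nonneg
            (by linarith [hmin i₀ (N - 1) (by omega)]) (sub_pos.mpr hxx).le
        have hb := hb1 i₀ (k + 1) (by omega) hkM
        have := mul_nonpos_of_nonneg_of_nonpos (Real.sqrt_nonneg (ε i₀)) hq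
        linarith
      · obtain ⟨j', rfl⟩ : ∃ j', j₀ = j' + 1 := ⟨j₀ - 1, by omega⟩
        have hjN : j' + 1 ≤ N - 1 := by omega
        have hLa := hL i₀ (j' + 1) (by omega) hjN (k + 1) (by omega) hkM
        simp only [Nat.add_sub_cancel] at hLa
        have hτ : 0 < T / (M : ℝ) :=
          div_pos hT (by exact_mod_cast Nat.pos_of_ne_zero (by omega))
        have hold : 0 ≤ W i₀ (j' + 1) k := ihk i₀ (j' + 1) hj₀
        have hA : (W i₀ (j' + 1) (k + 1) - W i₀ (j' + 1) k) / (T / (M : ℝ)) ≤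
            W i₀ (j' + 1) (k + 1) / (T / (M : ℝ)) := by
          gcongr
          · linarith
        have hAneg : W i₀ (j' + 1) (k + 1) / (T / (M : ℝ)) < 0 :=
          div_neg_of_neg_of_pos h hτ
        have hx1 : 0 < x (j' + 1) - x j' := sub_pos.mpr (hxm j' (by omega))
        have hx2 : 0 < x (j' + 1 + 1) - x (j' + 1) :=
          sub_pos.mpr (hxm (j' + 1) (by omega))
        have hx3 : 0 < x (j' + 1 + 1) - x j' := by linarith
        have hd1 : 0 ≤ (W i₀ (j' + 1 + 1) (k + 1) - W i₀ (j' + 1) (k + 1)) /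
            (x (j' + 1 + 1) - x (j' + 1)) :=
          div_nonneg (by linarith [hmin i₀ (j' + 1 + 1) (by omega)]) hx2.le
        have hd2 : (W i₀ (j' + 1) (k + 1) - W i₀ j' (k + 1)) /
            (x (j' + 1) - x j') ≤ 0 :=
          div_nonpos_of_nonpos_of_nonneg
            (by linarith [hmin i₀ j' (by omega)]) hx1.le
        have hB : 0 ≤ ε i₀ * (2 / (x (j' + 1 + 1) - x j') *
            ((W i₀ (j' + 1 + 1) (k + 1) - W i₀ (j' + 1) (k + 1)) /
                (x (j' + 1 + 1) - x (j' + 1))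
              - (W i₀ (j' + 1) (k + 1) - W i₀ j' (k + 1)) /
                (x (j' + 1) - x j'))) := by
          apply mul_nonneg (hε0 i₀)
          apply mul_nonneg (by positivity)
          linarith
        have hS : ∑ m, a i₀ m (j' + 1) (k + 1) * W m (j' + 1) (k + 1) ≤
            (∑ m, a i₀ m (j' + 1) (k + 1)) * W i₀ (j' + 1) (k + 1) := by
          rw [Finset.sum_mul]
          apply Finset.sum_le_sum
          intro m _
          rcases eq_or_ne m i₀ with rfl | hm
          · exact le_of_eq rfl
          · exact mul_le_mul_of_nonpos_left (hmin m (j' + 1) hj₀)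
              (ha_off i₀ m (Ne.symm hm) (j' + 1) hj₀ (k + 1) hkM)
        have hSμ : (∑ m, a i₀ m (j' + 1) (k + 1)) * W i₀ (j' + 1) (k + 1) < 0 :=
          mul_neg_of_pos_of_neg (lt_trans hα0 (hα i₀ (j' + 1) hj₀ (k + 1) hkM)) h
        linarith
    exact le_trans hμ0 (hmin i i' hj')



/- STATEMENT 16: Discrete comparison principle for the finite difference
operator `L^{N,M}` with the discrete Robin boundary operators. -/
theorem stmt_16
    (n : ℕ) (T : ℝ) (hT : 0 < T)
    (N M : ℕ) (hN : 2 ≤ N) (hM : 1 ≤ M)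
    (x : ℕ → ℝ) (hx0 : x 0 = 0) (hxN : x N = 1)
    (hxm : ∀ j < N, x j < x (j + 1))
    (ε : Fin (n + 1) → ℝ)
    (hε0 : ∀ i, 0 < ε i) (hε1 : ∀ i, ε i < 1) (hεm : StrictMono ε)
    (a : Fin (n + 1) → Fin (n + 1) → ℕ → ℕ → ℝ)
    (ha_diag : ∀ i, ∀ j ≤ N, ∀ k ≤ M,
      ∑ m ∈ Finset.univ.erase i, |a i m j k| < a i i j k)
    (ha_off : ∀ i m, i ≠ m → ∀ j ≤ N, ∀ k ≤ M, a i m j k ≤ 0)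
    (α : ℝ) (hα0 : 0 < α)
    (hα : ∀ i, ∀ j ≤ N, ∀ k ≤ M, α < ∑ m, a i m j k)
    (Φ Z : Fin (n + 1) → ℕ → ℕ → ℝ)
    -- boundary comparison :
    (hb0 : ∀ i, ∀ k, 1 ≤ k → k ≤ M →
      |Z i 0 k - Real.sqrt (ε i) * ((Z i 1 k - Z i 0 k) / (x 1 - x 0))| ≤
        Φ i 0 k - Real.sqrt (ε i) * ((Φ i 1 k - Φ i 0 k) / (x 1 - x 0)))
    (hb1 : ∀ i, ∀ k, 1 ≤ k → k ≤ M →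
      |Z i N k + Real.sqrt (ε i) *
          ((Z i N k - Z i (N - 1) k) / (x N - x (N - 1)))| ≤
        Φ i N k + Real.sqrt (ε i) *
          ((Φ i N k - Φ i (N - 1) k) / (x N - x (N - 1))))
    -- initial comparison :
    (hinit : ∀ i, ∀ j ≤ N, |Z i j 0| ≤ Φ i j 0)
    -- interior comparison :
    (hL : ∀ i, ∀ j, 1 ≤ j → j ≤ N - 1 → ∀ k, 1 ≤ k → k ≤ M →
      |(Z i j k - Z i j (k - 1)) / (T / (M : ℝ))
        - ε i * (2 / (x (j + 1) - x (j - 1)) *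
            ((Z i (j + 1) k - Z i j k) / (x (j + 1) - x j)
              - (Z i j k - Z i (j - 1) k) / (x j - x (j - 1))))
        + ∑ m, a i m j k * Z m j k| ≤
      (Φ i j k - Φ i j (k - 1)) / (T / (M : ℝ))
        - ε i * (2 / (x (j + 1) - x (j - 1)) *
            ((Φ i (j + 1) k - Φ i j k) / (x (j + 1) - x j)
              - (Φ i j k - Φ i (j - 1) k) / (x j - x (j - 1))))
        + ∑ m, a i m j k * Φ m j k) :
    ∀ i, ∀ j ≤ N, ∀ k ≤ M, |Z i j k| ≤ Φ i j k := by
  have hsub : ∀ (s : ℝ), s = 1 ∨ s = -1 →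
      ∀ k ≤ M, ∀ i, ∀ j ≤ N, 0 ≤ Φ i j k + s * Z i j k := by
    intro s hs
    refine mesh_nonneg n T hT N M hN hM x hxm ε (fun i => (hε0 i).le) a ha_off
      α hα0 hα (fun i j k => Φ i j k + s * Z i j k) ?_ ?_ ?_ ?_
    · intro i k hk1 hk2
      have h := abs_le.mp (hb0 i k hk1 hk2)
      have key : (Φ i 0 k + s * Z i 0 k) - Real.sqrt (ε i) *
          (((Φ i 1 k + s * Z i 1 k) - (Φ i 0 k + s * Z i 0 k)) / (x 1 - x 0)) =
          (Φ i 0 k - Real.sqrt (ε i) * ((Φ i 1 k - Φ i 0 k) / (x 1 - x 0))) +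
          s * (Z i 0 k - Real.sqrt (ε i) * ((Z i 1 k - Z i 0 k) / (x 1 - x 0))) := by
        ring
      rw [key]
      rcases hs with rfl | rfl
      · linarith [h.1, h.2]
      · linarith [h.1, h.2]
    · intro i k hk1 hk2
      have h := abs_le.mp (hb1 i k hk1 hk2)
      have key : (Φ i N k + s * Z i N k) + Real.sqrt (ε i) *
          (((Φ i N k + s * Z i N k) - (Φ i (N - 1) k + s * Z i (N - 1) k)) /
            (x N - x (N - 1))) =
          (Φ i N k + Real.sqrt (ε i) *
            ((Φ i N k - Φ i (N - 1) k) / (x N - x (N - 1)))) +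
          s * (Z i N k + Real.sqrt (ε i) *
            ((Z i N k - Z i (N - 1) k) / (x N - x (N - 1)))) := by
        ring
      rw [key]
      rcases hs with rfl | rfl
      · linarith [h.1, h.2]
      · linarith [h.1, h.2]
    · intro i j hj
      have h := abs_le.mp (hinit i j hj)
      rcases hs with rfl | rfl
      · linarith [h.1, h.2]
      · linarith [h.1, h.2]
    · intro i j hj1 hj2 k hk1 hk2
      have h := abs_le.mp (hL i j hj1 hj2 k hk1 hk2)
      have hsum : ∑ m, a i m j k * (Φ m j k + s * Z m j k) =
          (∑ m, a i m j k * Φ m j k) + s * ∑ m, a i m j k * Z m j k := by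
        rw [Finset.mul_sum, ← Finset.sum_add_distrib]
        exact Finset.sum_congr rfl fun m _ => by ring
      have key : ((Φ i j k + s * Z i j k) - (Φ i j (k - 1) + s * Z i j (k - 1))) /
            (T / (M : ℝ))
          - ε i * (2 / (x (j + 1) - x (j - 1)) *
              (((Φ i (j + 1) k + s * Z i (j + 1) k) - (Φ i j k + s * Z i j k)) /
                  (x (j + 1) - x j)
                - ((Φ i j k + s * Z i j k) - (Φ i (j - 1) k + s * Z i (j - 1) k)) /
                  (x j - x (j - 1))))
          + ∑ m, a i m j k * (Φ m j k + s * Z m j k) =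
          ((Φ i j k - Φ i j (k - 1)) / (T / (M : ℝ))
            - ε i * (2 / (x (j + 1) - x (j - 1)) *
                ((Φ i (j + 1) k - Φ i j k) / (x (j + 1) - x j)
                  - (Φ i j k - Φ i (j - 1) k) / (x j - x (j - 1))))
            + ∑ m, a i m j k * Φ m j k)
          + s * ((Z i j k - Z i j (k - 1)) / (T / (M : ℝ))
            - ε i * (2 / (x (j + 1) - x (j - 1)) *
                ((Z i (j + 1) k - Z i j k) / (x (j + 1) - x j)
                  - (Z i j k - Z i (j - 1) k) / (x j - x (j - 1))))
            + ∑ m, a i m j k * Z m j k) := by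
        rw [hsum]; ring
      rw [key]
      rcases hs with rfl | rfl
      · linarith [h.1, h.2]
      · linarith [h.1, h.2]
  intro i j hj k hk
  rw [abs_le]
  constructor
  · have := hsub 1 (Or.inl rfl) k hk i j hj
    linarith
  · have := hsub (-1) (Or.inr rfl) k hk i j hj
    linarith
end
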